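/- arXiv:math/0612542 — 5 statements merged into one kernel-verified Lean document; each statement's English description precedes it below -/
import Mathlib

section
/- There exists a family of worlds and valuations witnessing that □(p ⊙ q) ⇒ (□p ⊙ □q) is not a tautology of many-valued Kripke semantics: concretely, there is an n+1-valued Kripke model (for some n ≥ 2) and a world w with Val(□(p ⊙ q) ⇒ (□p ⊙ □q), w) < 1. -/
/-- Modal many-valued formulas over countably many propositional variables. -/
inductive MForm : Type
  | var : ℕ → MForm
  | neg : MForm → MForm
  | oplus : MForm → MForm → MForm
  | box : MForm → MForm

/-- Derived connectives. -/
def MForm.imp (φ ψ : MForm) : MForm := .oplus ψ (.neg φ)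
def MForm.odot (φ ψ : MForm) : MForm := .neg (.oplus (.neg φ) (.neg ψ))
def MForm.or (φ ψ : MForm) : MForm := (φ.imp ψ).imp ψ
def MForm.and (φ ψ : MForm) : MForm := .neg (MForm.or (.neg φ) (.neg ψ))
def MForm.dia (φ : MForm) : MForm := .neg (.box (.neg φ))

/-- A many-valued Kripke model: a nonempty set of worlds, an accessibility
relation and a `[0,1]`-valued valuation of the propositional variables. -/
structure KModel where
  W : Type
  nonempty : Nonempty W
  R : W → W → Prop
  v : ℕ → W → ℝ
  hv : ∀ p w, v p w ∈ Set.Icc (0:ℝ) 1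

/-- Extension of a valuation to formulas, with the Łukasiewicz operations
interpreted pointwise and `□` interpreted as the infimum of the values at the
accessible worlds (`1` if there is no accessible world: inserting `1` into the
set does not change the infimum of a nonempty set of values in `[0,1]`). -/
noncomputable def mval {W : Type} (R : W → W → Prop) (v : ℕ → W → ℝ) :
    MForm → W → ℝ
  | .var p, w => v p w
  | .neg φ, w => 1 - mval R v φ w
  | .oplus φ ψ, w => min 1 (mval R v φ w + mval R v ψ w)
  | .box φ, w => sInf (insert 1 {x | ∃ w', R w w' ∧ x = mval R v φ w'})

/-- Value of a formula in a Kripke model. -/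
noncomputable def KModel.val (M : KModel) (φ : MForm) (w : M.W) : ℝ :=
  mval M.R M.v φ w

/-- The set `Ł_n = {k/n : 0 ≤ k ≤ n}`. -/
def Lukn (n : ℕ) : Set ℝ := {x | ∃ k : ℕ, k ≤ n ∧ x = (k : ℝ) / n}


noncomputable def myv : ℕ → Bool → ℝ := fun p w =>
  if p = 0 then (if w then 1/2 else 1) else if p = 1 then (if w then 1 else 1/2) else 0

lemma set_eq (f : Bool → ℝ) :
    {x | ∃ w' : Bool, True ∧ x = f w'} = {f false, f true} := by
  ext x
  simp only [Set.mem_setOf_eq, true_and, Set.mem_insert_iff, Set.mem_singleton_iff]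
  constructor
  · rintro ⟨w, rfl⟩; cases w <;> simp
  · rintro (rfl | rfl) <;> [exact ⟨false, rfl⟩; exact ⟨true, rfl⟩]

lemma inf3 (a b c : ℝ) : sInf ({a, b, c} : Set ℝ) = min a (min b c) := by
  rw [csInf_insert (Set.Finite.bddBelow (by simp)) (by simp), csInf_pair]

/-- `□(p ⊙ q) ⇒ (□p ⊙ □q)` is not a tautology of the many-valued Kripke
semantics: there are `n ≥ 2`, an `n+1`-valued Kripke model and a world at which
this formula takes a value `< 1`. -/
theorem box_odot_converse_not_tautology :
    ∃ n : ℕ, 2 ≤ n ∧ ∃ M : KModel, (∀ p w, M.v p w ∈ Lukn n) ∧ ∃ w : M.W,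
      M.val ((MForm.box ((MForm.var 0).odot (MForm.var 1))).imp
        ((MForm.box (MForm.var 0)).odot (MForm.box (MForm.var 1)))) w < 1 := by
  refine ⟨2, le_refl 2, ⟨Bool, ⟨true⟩, fun _ _ => True, myv, ?_⟩, ?_, ⟨true, ?_⟩⟩
  · intro p w
    unfold myv
    split
    · split <;> norm_num
    · split
      · split <;> norm_num
      · norm_num
  · intro p w
    show myv p w ∈ _
    unfold myv Lukn
    split
    · split
      · exact ⟨1, by norm_num⟩
      · exact ⟨2, by norm_num⟩
    · split
      · split
        · exact ⟨2, by norm_num⟩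
        · exact ⟨1, by norm_num⟩
      · exact ⟨0, by norm_num⟩
  · show mval _ _ _ _ < 1
    simp only [MForm.imp, MForm.odot, mval, set_eq]
    norm_num [inf3, myv]
end

section
/- For every rational r in (0,1] that is a finite sum of powers of 2 (a dyadic rational), there exists a function τ_r : [0,1] → [0,1] obtained as a finite composition of the maps x ↦ min(1, 2x) and x ↦ max(0, 2x - 1), such that τ_r(x) < 1 for all x < r and τ_r(x) = 1 for all x ≥ r. -/
/-- Functions `[0,1] → [0,1]` that are finite compositions of the maps
`x ↦ x ⊕ x = min(1, 2x)` and `x ↦ x ⊙ x = max(0, 2x-1)`. -/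
inductive IsLukComp : (ℝ → ℝ) → Prop
  | dbl : IsLukComp (fun x => min 1 (2 * x))
  | sq : IsLukComp (fun x => max 0 (2 * x - 1))
  | comp {f g : ℝ → ℝ} : IsLukComp f → IsLukComp g → IsLukComp (f ∘ g)

lemma exists_tau_aux : ∀ m : ℕ, ∀ r : ℝ, 0 < r → r ≤ 1 → (∃ k : ℕ, r = (k : ℝ) / 2 ^ m) →
    ∃ τ : ℝ → ℝ, IsLukComp τ ∧
      (∀ x ∈ Set.Icc (0:ℝ) 1, τ x ∈ Set.Icc (0:ℝ) 1) ∧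
      (∀ x ∈ Set.Icc (0:ℝ) 1, x < r → τ x < 1) ∧
      (∀ x ∈ Set.Icc (0:ℝ) 1, r ≤ x → τ x = 1) := by
  intro m
  induction m with
  | zero =>
    intro r hr0 hr1 ⟨k, hk⟩
    simp only [pow_zero, div_one] at hk
    have hr : r = 1 := by
      have hk1 : (1:ℝ) ≤ k := by
        have : (0:ℝ) < k := hk ▸ hr0
        exact_mod_cast Nat.one_le_iff_ne_zero.mpr (by exact_mod_cast this.ne')
      linarith [hk ▸ hr1, hk ▸ hk1]
    refine ⟨fun x => max 0 (2 * x - 1), IsLukComp.sq, ?_, ?_, ?_⟩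
    · rintro x ⟨hx0, hx1⟩
      constructor
      · exact le_max_left _ _
      · apply max_le <;> linarith
    · rintro x ⟨hx0, hx1⟩ hxr
      rw [hr] at hxr
      apply max_lt <;> linarith
    · rintro x ⟨hx0, hx1⟩ hxr
      rw [hr] at hxr
      have hx : x = 1 := le_antisymm hx1 hxr
      rw [hx]; norm_num
  | succ m ih =>
    intro r hr0 hr1 ⟨k, hk⟩
    by_cases hhalf : r ≤ 1 / 2
    · obtain ⟨τ, hτ, hmem, hlt, heq⟩ := ih (2 * r) (by linarith) (by linarith)
        ⟨k, by rw [hk]; ring⟩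
      refine ⟨τ ∘ (fun x => min 1 (2 * x)), IsLukComp.comp hτ IsLukComp.dbl, ?_, ?_, ?_⟩
      · rintro x ⟨hx0, hx1⟩
        exact hmem _ ⟨le_min (by norm_num) (by linarith), min_le_left _ _⟩
      · rintro x ⟨hx0, hx1⟩ hxr
        have h2x : min 1 (2 * x) = 2 * x := min_eq_right (by linarith)
        simp only [Function.comp_apply, h2x]
        exact hlt (2 * x) ⟨by linarith, by linarith⟩ (by linarith)
      · rintro x ⟨hx0, hx1⟩ hxr
        exact heq _ ⟨le_min (by norm_num) (by linarith), min_le_left _ _⟩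
          (le_min (by linarith) (by linarith))
    · push_neg at hhalf
      have hk2 : (2:ℝ) ^ m < k := by
        have h1 : (k : ℝ) = r * 2 ^ (m + 1) := by
          rw [hk]; field_simp
        rw [h1, pow_succ]
        have : (0:ℝ) < 2 ^ m := by positivity
        nlinarith
      have hkn : 2 ^ m ≤ k := by exact_mod_cast hk2.le
      obtain ⟨τ, hτ, hmem, hlt, heq⟩ := ih (2 * r - 1) (by linarith) (by linarith)
        ⟨k - 2 ^ m, by
          have hc : ((k - 2 ^ m : ℕ) : ℝ) = (k : ℝ) - 2 ^ m := by
            push_cast [Nat.cast_sub hkn]; ring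
          rw [hc, hk]
          field_simp
          ring⟩
      refine ⟨τ ∘ (fun x => max 0 (2 * x - 1)), IsLukComp.comp hτ IsLukComp.sq, ?_, ?_, ?_⟩
      · rintro x ⟨hx0, hx1⟩
        exact hmem _ ⟨le_max_left _ _, max_le (by norm_num) (by linarith)⟩
      · rintro x ⟨hx0, hx1⟩ hxr
        refine hlt _ ⟨le_max_left _ _, max_le (by norm_num) (by linarith)⟩ ?_
        apply max_lt <;> linarith
      · rintro x ⟨hx0, hx1⟩ hxr
        refine heq _ ⟨le_max_left _ _, max_le (by norm_num) (by linarith)⟩ ?_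
        refine le_max_of_le_right (by linarith)

/-- For every dyadic rational `r ∈ (0,1]` there is a finite composition `τ_r` of
the maps `x ↦ x ⊕ x` and `x ↦ x ⊙ x` such that `τ_r(x) < 1` for `x < r` and
`τ_r(x) = 1` for `x ≥ r` (on `[0,1]`). -/
theorem exists_tau (r : ℝ) (hr0 : 0 < r) (hr1 : r ≤ 1)
    (hdyadic : ∃ k m : ℕ, r = (k : ℝ) / 2 ^ m) :
    ∃ τ : ℝ → ℝ, IsLukComp τ ∧
      (∀ x ∈ Set.Icc (0:ℝ) 1, τ x ∈ Set.Icc (0:ℝ) 1) ∧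
      (∀ x ∈ Set.Icc (0:ℝ) 1, x < r → τ x < 1) ∧
      (∀ x ∈ Set.Icc (0:ℝ) 1, r ≤ x → τ x = 1) := by
  obtain ⟨k, m, hkm⟩ := hdyadic
  exact exists_tau_aux m r hr0 hr1 ⟨k, hkm⟩
end

section
/- Let A be an MV-algebra and F a filter of A. Then F is a maximal (proper) filter if and only if the quotient A/F embeds into the MV-algebra [0,1], and in that case the embedding A/F → [0,1] is unique. -/
/-- An MV-algebra structure on a type `A` (standard axiomatization over
`⊕, ¬, 0`). -/
structure MVAlg (A : Type) where
  oplus : A → A → A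
  neg : A → A
  zero : A
  oplus_assoc : ∀ x y z, oplus x (oplus y z) = oplus (oplus x y) z
  oplus_comm : ∀ x y, oplus x y = oplus y x
  oplus_zero : ∀ x, oplus x zero = x
  neg_neg : ∀ x, neg (neg x) = x
  oplus_one : ∀ x, oplus x (neg zero) = neg zero
  luk : ∀ x y, oplus (neg (oplus (neg x) y)) y = oplus (neg (oplus (neg y) x)) x

namespace MVAlg

variable {A : Type}

def one (M : MVAlg A) : A := M.neg M.zero
def imp (M : MVAlg A) (x y : A) : A := M.oplus (M.neg x) y
def odot (M : MVAlg A) (x y : A) : A := M.neg (M.oplus (M.neg x) (M.neg y))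

/-- `m`-fold `⊙`-power. -/
def pow (M : MVAlg A) (x : A) : ℕ → A
  | 0 => M.one
  | m + 1 => M.odot x (M.pow x m)

end MVAlg

/-- A filter of an MV-algebra: a nonempty subset, upward closed (w.r.t. the
order `x ≤ y ↔ x ⇒ y = 1`) and closed under modus ponens. -/
def IsMVFilter {A : Type} (M : MVAlg A) (F : Set A) : Prop :=
  F.Nonempty ∧ (∀ x y, x ∈ F → M.imp x y = M.one → y ∈ F) ∧
    (∀ x y, x ∈ F → M.imp x y ∈ F → y ∈ F)

/-- A maximal filter: a proper filter maximal among the proper filters. -/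
def IsMaximalMVFilter {A : Type} (M : MVAlg A) (F : Set A) : Prop :=
  IsMVFilter M F ∧ F ≠ Set.univ ∧
    ∀ G, IsMVFilter M G → G ≠ Set.univ → F ⊆ G → G = F

/-- An MV-homomorphism from `A` into the standard MV-algebra `[0,1]`. -/
def IsMVHomToI {A : Type} (M : MVAlg A) (f : A → ℝ) : Prop :=
  (∀ x, f x ∈ Set.Icc (0:ℝ) 1) ∧ f M.zero = 0 ∧
    (∀ x y, f (M.oplus x y) = min 1 (f x + f y)) ∧
    (∀ x, f (M.neg x) = 1 - f x)

/-- `f : A → [0,1]` encodes an embedding of the quotient `A/F` into `[0,1]`: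
it is an MV-homomorphism and two elements get the same value exactly when they
are congruent modulo `F`. -/
def IsQuotEmbedding {A : Type} (M : MVAlg A) (F : Set A) (f : A → ℝ) : Prop :=
  IsMVHomToI M f ∧ ∀ x y, (f x = f y ↔ (M.imp x y ∈ F ∧ M.imp y x ∈ F))

/-!
If `F` is maximal and `x ∉ F`, then `F` and `x` generate the improper filter, so
`¬(x ^ k) ∈ F` for some `⊙`-power. Hence every `x ≠ 1` of `A/F` has a vanishing power, and
`A/F` is a chain: if `x ⇒ y ∉ F`, then `¬((x ⇒ y) ^ k) ∈ F`, and prelinearity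
`(x ⇒ y) ^ k ⊔ (y ⇒ x) = 1` puts `y ⇒ x` in `F`. Chang's construction turns such a chain into
an archimedean linearly ordered group whose elements are `n + a` with `n ∈ ℤ` and `a ∈ A/F`,
`a ≠ 1`; Hölder's theorem (`Archimedean.embedReal`) embeds it into `ℝ`, mapping `A/F` onto a
subalgebra of `[0, 1]`.

Conversely, an embedding `f` identifies `F` with `f⁻¹(1)`. If `z ∉ F` then `f z < 1`, so some
power of `z` is congruent to `0`, and a filter containing `F` and `z` contains `0`.

Uniqueness: a homomorphism `f : A → [0, 1]` is determined by `f⁻¹(1)`, because the terms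
`dyadic n j x` take the value `min 1 (max 0 (2 ^ n * f x - j))` and so detect whether
`f x ≥ (j + 1) / 2 ^ n`.
-/

namespace MVAlg

variable {A : Type} (M : MVAlg A)

def le (x y : A) : Prop := M.imp x y = M.one

def sup (x y : A) : A := M.oplus (M.neg (M.imp x y)) y

def inf (x y : A) : A := M.neg (M.sup (M.neg x) (M.neg y))

local notation:65 x:65 " ⊕ₘ " y:66 => MVAlg.oplus M x y
local notation:70 x:70 " ⊙ₘ " y:71 => MVAlg.odot M x y
local notation:75 "¬ₘ " x:75 => MVAlg.neg M x
local notation:55 x:56 " ⇒ₘ " y:55 => MVAlg.imp M x y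
local notation:50 x:51 " ≤ₘ " y:51 => MVAlg.le M x y
local notation:68 x:68 " ⊔ₘ " y:69 => MVAlg.sup M x y
local notation:69 x:69 " ⊓ₘ " y:70 => MVAlg.inf M x y

section Basic

theorem zero_oplus (x : A) : M.zero ⊕ₘ x = x := by
  rw [M.oplus_comm]; exact M.oplus_zero x

theorem oplus_one' (x : A) : x ⊕ₘ M.one = M.one := M.oplus_one x

theorem one_oplus (x : A) : M.one ⊕ₘ x = M.one := by
  rw [M.oplus_comm]; exact M.oplus_one x

protected theorem neg_zero : ¬ₘ M.zero = M.one := rfl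

theorem neg_one : ¬ₘ M.one = M.zero := M.neg_neg M.zero

protected theorem neg_injective : Function.Injective M.neg := fun x y h => by
  rw [← M.neg_neg x, h, M.neg_neg]

theorem neg_oplus (x y : A) : ¬ₘ (x ⊕ₘ y) = ¬ₘ x ⊙ₘ ¬ₘ y := by
  unfold odot; rw [M.neg_neg, M.neg_neg]

theorem neg_odot (x y : A) : ¬ₘ (x ⊙ₘ y) = ¬ₘ x ⊕ₘ ¬ₘ y := M.neg_neg _

theorem neg_imp (x y : A) : ¬ₘ (x ⇒ₘ y) = x ⊙ₘ ¬ₘ y := by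
  unfold imp; rw [M.neg_oplus, M.neg_neg]

theorem neg_oplus_self (x : A) : ¬ₘ x ⊕ₘ x = M.one := by
  have h := M.luk M.one x
  rw [M.neg_one, M.zero_oplus, M.oplus_one'] at h
  exact h

theorem oplus_neg_self (x : A) : x ⊕ₘ ¬ₘ x = M.one := by
  rw [M.oplus_comm]; exact M.neg_oplus_self x

theorem odot_comm (x y : A) : x ⊙ₘ y = y ⊙ₘ x := by
  unfold odot; rw [M.oplus_comm]

theorem odot_assoc (x y z : A) : x ⊙ₘ (y ⊙ₘ z) = x ⊙ₘ y ⊙ₘ z := by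
  unfold odot; rw [M.neg_neg, M.neg_neg, M.oplus_assoc]

theorem odot_odot_odot_comm (p q r s : A) : p ⊙ₘ q ⊙ₘ (r ⊙ₘ s) = p ⊙ₘ r ⊙ₘ (q ⊙ₘ s) := by
  rw [← M.odot_assoc p q, M.odot_assoc q r, M.odot_comm q r, ← M.odot_assoc r q,
    M.odot_assoc p r]

theorem odot_one (x : A) : x ⊙ₘ M.one = x := by
  unfold odot; rw [M.neg_one, M.oplus_zero, M.neg_neg]

theorem odot_neg_self (x : A) : x ⊙ₘ ¬ₘ x = M.zero := by
  unfold odot; rw [M.neg_neg, M.neg_oplus_self, M.neg_one]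

protected theorem le_refl (x : A) : x ≤ₘ x := M.neg_oplus_self x

protected theorem imp_self (x : A) : x ⇒ₘ x = M.one := M.le_refl x

theorem le_one (x : A) : x ≤ₘ M.one := M.oplus_one (¬ₘ x)

protected theorem zero_le (x : A) : M.zero ≤ₘ x := M.one_oplus x

protected theorem sup_comm (x y : A) : x ⊔ₘ y = y ⊔ₘ x := M.luk x y

protected theorem sup_eq_right {x y : A} (h : x ≤ₘ y) : x ⊔ₘ y = y := by
  unfold sup; rw [h, M.neg_one, M.zero_oplus]

protected theorem sup_eq_left {x y : A} (h : y ≤ₘ x) : x ⊔ₘ y = x := by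
  rw [M.sup_comm]; exact M.sup_eq_right h

protected theorem le_antisymm {x y : A} (h₁ : x ≤ₘ y) (h₂ : y ≤ₘ x) : x = y := by
  rw [← M.sup_eq_right h₁, M.sup_comm, M.sup_eq_right h₂]

theorem le_of_oplus_eq {x u y : A} (h : x ⊕ₘ u = y) : x ≤ₘ y := by
  show ¬ₘ x ⊕ₘ y = M.one
  rw [← h, M.oplus_assoc, M.neg_oplus_self, M.one_oplus]

theorem le_self_oplus (x u : A) : x ≤ₘ x ⊕ₘ u := M.le_of_oplus_eq rfl

theorem le_oplus_self (x u : A) : x ≤ₘ u ⊕ₘ x := M.le_of_oplus_eq (M.oplus_comm x u)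

protected theorem le_sup_right (x y : A) : y ≤ₘ x ⊔ₘ y := M.le_oplus_self y _

protected theorem le_sup_left (x y : A) : x ≤ₘ x ⊔ₘ y := by
  rw [M.sup_comm]; exact M.le_sup_right y x

theorem eq_one_of_one_le {x : A} (h : M.one ≤ₘ x) : x = M.one :=
  M.le_antisymm (M.le_one x) h

theorem oplus_odot_neg_of_le {x y : A} (h : x ≤ₘ y) : x ⊕ₘ y ⊙ₘ ¬ₘ x = y := by
  have e := M.sup_eq_right h
  rw [M.sup_comm] at e
  unfold sup at e
  rwa [M.neg_imp, M.oplus_comm] at e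

protected theorem le_trans {x y z : A} (h₁ : x ≤ₘ y) (h₂ : y ≤ₘ z) : x ≤ₘ z :=
  M.le_of_oplus_eq (by rw [M.oplus_assoc, M.oplus_odot_neg_of_le h₁, M.oplus_odot_neg_of_le h₂] :
    x ⊕ₘ (y ⊙ₘ ¬ₘ x ⊕ₘ z ⊙ₘ ¬ₘ y) = z)

instance : @Trans A A A M.le M.le M.le := ⟨M.le_trans⟩

theorem oplus_le_oplus_right {x y : A} (c : A) (h : x ≤ₘ y) : x ⊕ₘ c ≤ₘ y ⊕ₘ c :=
  M.le_of_oplus_eq (by rw [M.oplus_comm x c, ← M.oplus_assoc, M.oplus_odot_neg_of_le h,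
    M.oplus_comm] : x ⊕ₘ c ⊕ₘ y ⊙ₘ ¬ₘ x = y ⊕ₘ c)

theorem oplus_le_oplus_left {x y : A} (c : A) (h : x ≤ₘ y) : c ⊕ₘ x ≤ₘ c ⊕ₘ y := by
  rw [M.oplus_comm c x, M.oplus_comm c y]; exact M.oplus_le_oplus_right c h

protected theorem neg_le_neg {x y : A} (h : x ≤ₘ y) : ¬ₘ y ≤ₘ ¬ₘ x := by
  show ¬ₘ ¬ₘ y ⊕ₘ ¬ₘ x = M.one
  rw [M.neg_neg, M.oplus_comm]
  exact h

protected theorem neg_le_neg_iff {x y : A} : ¬ₘ y ≤ₘ ¬ₘ x ↔ x ≤ₘ y :=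
  ⟨fun h => by simpa only [M.neg_neg] using M.neg_le_neg h, M.neg_le_neg⟩

theorem le_neg_comm {x y : A} : x ≤ₘ ¬ₘ y ↔ y ≤ₘ ¬ₘ x := by
  rw [← M.neg_le_neg_iff, M.neg_neg]

theorem neg_le_comm {x y : A} : ¬ₘ x ≤ₘ y ↔ ¬ₘ y ≤ₘ x := by
  rw [← M.neg_le_neg_iff, M.neg_neg]

theorem odot_le_iff_le_imp {x y z : A} : x ⊙ₘ y ≤ₘ z ↔ x ≤ₘ y ⇒ₘ z := by
  unfold le imp
  rw [M.neg_odot, ← M.oplus_assoc]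

theorem odot_le_odot_right {x y : A} (c : A) (h : x ≤ₘ y) : x ⊙ₘ c ≤ₘ y ⊙ₘ c :=
  M.neg_le_neg (M.oplus_le_oplus_right _ (M.neg_le_neg h))

theorem odot_le_odot_left {x y : A} (c : A) (h : x ≤ₘ y) : c ⊙ₘ x ≤ₘ c ⊙ₘ y := by
  rw [M.odot_comm c x, M.odot_comm c y]; exact M.odot_le_odot_right c h

theorem odot_le_odot {a a' b b' : A} (ha : a ≤ₘ a') (hb : b ≤ₘ b') : a ⊙ₘ b ≤ₘ a' ⊙ₘ b' :=
  M.le_trans (M.odot_le_odot_right b ha) (M.odot_le_odot_left a' hb)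

theorem odot_le_left (x y : A) : x ⊙ₘ y ≤ₘ x := by
  simpa only [M.odot_one] using M.odot_le_odot_left x (M.le_one y)

theorem odot_le_right (x y : A) : x ⊙ₘ y ≤ₘ y := by
  rw [M.odot_comm]; exact M.odot_le_left y x

theorem imp_odot_le (x y : A) : (x ⇒ₘ y) ⊙ₘ x ≤ₘ y :=
  M.odot_le_iff_le_imp.mpr (M.le_refl _)

theorem odot_imp_le (x y : A) : x ⊙ₘ (x ⇒ₘ y) ≤ₘ y := by
  rw [M.odot_comm]; exact M.imp_odot_le x y

protected theorem sup_le {x y z : A} (h₁ : x ≤ₘ z) (h₂ : y ≤ₘ z) : x ⊔ₘ y ≤ₘ z := by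
  have e := M.oplus_odot_neg_of_le h₂
  rw [M.oplus_comm] at e
  unfold sup
  rw [M.neg_imp, ← e]
  exact M.oplus_le_oplus_right y (M.odot_le_odot_right _ h₁)

protected theorem neg_sup (x y : A) : ¬ₘ (x ⊔ₘ y) = ¬ₘ x ⊓ₘ ¬ₘ y := by
  unfold inf; rw [M.neg_neg, M.neg_neg]

protected theorem neg_inf (x y : A) : ¬ₘ (x ⊓ₘ y) = ¬ₘ x ⊔ₘ ¬ₘ y := M.neg_neg _

protected theorem inf_le_left (x y : A) : x ⊓ₘ y ≤ₘ x := M.neg_le_comm.mp (M.le_sup_left _ _)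

protected theorem le_inf {x y z : A} (h₁ : z ≤ₘ x) (h₂ : z ≤ₘ y) : z ≤ₘ x ⊓ₘ y :=
  M.le_neg_comm.mp (M.sup_le (M.neg_le_neg h₁) (M.neg_le_neg h₂))

protected theorem inf_eq_left {x y : A} (h : x ≤ₘ y) : x ⊓ₘ y = x :=
  M.le_antisymm (M.inf_le_left x y) (M.le_inf (M.le_refl x) h)

theorem inf_eq_odot (x y : A) : x ⊓ₘ y = y ⊙ₘ (¬ₘ y ⊕ₘ x) := by
  unfold inf sup imp odot
  rw [M.neg_neg, M.oplus_comm x, M.oplus_comm (¬ₘ (¬ₘ y ⊕ₘ x))]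

theorem odot_sup (x y z : A) : x ⊙ₘ (y ⊔ₘ z) = x ⊙ₘ y ⊔ₘ x ⊙ₘ z := by
  refine M.le_antisymm ?_ (M.sup_le (M.odot_le_odot_left x (M.le_sup_left y z))
    (M.odot_le_odot_left x (M.le_sup_right y z)))
  rw [M.odot_comm]
  refine M.odot_le_iff_le_imp.mpr (M.sup_le ?_ ?_) <;> refine M.odot_le_iff_le_imp.mp ?_ <;>
    rw [M.odot_comm]
  exacts [M.le_sup_left _ _, M.le_sup_right _ _]

theorem sup_eq_odot_oplus (x y : A) : x ⊔ₘ y = x ⊙ₘ ¬ₘ y ⊕ₘ y := by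
  unfold sup; rw [M.neg_imp]

theorem odot_oplus_neg (x y : A) : x ⊙ₘ y ⊕ₘ ¬ₘ y = x ⊔ₘ ¬ₘ y := by
  rw [M.sup_eq_odot_oplus, M.neg_neg]

theorem oplus_odot_neg (x y : A) : (x ⊕ₘ y) ⊙ₘ ¬ₘ x = y ⊓ₘ ¬ₘ x := by
  rw [M.inf_eq_odot, M.neg_neg, M.odot_comm]

theorem oplus_neg_cancel {u v c : A} (hu : u ≤ₘ c) (hv : v ≤ₘ c)
    (h : u ⊕ₘ ¬ₘ c = v ⊕ₘ ¬ₘ c) : u = v := by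
  rw [← M.inf_eq_left hu, ← M.inf_eq_left hv, M.inf_eq_odot, M.inf_eq_odot,
    M.oplus_comm (¬ₘ c), M.oplus_comm (¬ₘ c), h]

theorem odot_neg_inf_odot_neg (x y : A) : x ⊙ₘ ¬ₘ y ⊓ₘ y ⊙ₘ ¬ₘ x = M.zero := by
  set a := x ⊙ₘ ¬ₘ y
  set b := y ⊙ₘ ¬ₘ x
  have hx : y ⊓ₘ x ⊕ₘ a = x := by
    have hna : ¬ₘ a = ¬ₘ x ⊕ₘ y := by rw [M.neg_odot, M.neg_neg]
    rw [M.inf_eq_odot, ← hna, ← M.sup_eq_odot_oplus, M.sup_comm]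
    exact M.sup_eq_right (M.odot_le_left x _)
  have hb : b ⊙ₘ ¬ₘ a = b := by
    have hy : y ⊙ₘ ¬ₘ (y ⊓ₘ x) = b := by
      rw [M.neg_inf, M.odot_sup, M.odot_neg_self]
      exact M.sup_eq_right (M.zero_le _)
    calc b ⊙ₘ ¬ₘ a = y ⊙ₘ ¬ₘ (y ⊓ₘ x) ⊙ₘ ¬ₘ a := by rw [hy]
      _ = b := by rw [← M.odot_assoc, ← M.neg_oplus, hx]
  refine M.le_antisymm ?_ (M.zero_le _)
  calc a ⊓ₘ b = b ⊙ₘ ¬ₘ a ⊙ₘ (¬ₘ b ⊕ₘ a) := by rw [M.inf_eq_odot, hb]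
    _ = b ⊙ₘ (¬ₘ a ⊙ₘ (¬ₘ a ⇒ₘ ¬ₘ b)) := by
      rw [← M.odot_assoc]; unfold imp; rw [M.neg_neg, M.oplus_comm]
    _ ≤ₘ b ⊙ₘ ¬ₘ b := M.odot_le_odot_left b (M.odot_imp_le _ _)
    _ = M.zero := M.odot_neg_self b

theorem imp_sup_imp (x y : A) : (x ⇒ₘ y) ⊔ₘ (y ⇒ₘ x) = M.one := by
  refine M.neg_injective ?_
  rw [M.neg_sup, M.neg_imp, M.neg_imp, M.odot_neg_inf_odot_neg, M.neg_one]

end Basic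

section Filter

theorem imp_one_left (x : A) : M.one ⇒ₘ x = x := by
  unfold imp; rw [M.neg_one, M.zero_oplus]

theorem imp_zero (x : A) : x ⇒ₘ M.zero = ¬ₘ x := M.oplus_zero (¬ₘ x)

theorem neg_imp_neg (x y : A) : ¬ₘ x ⇒ₘ ¬ₘ y = y ⇒ₘ x := by
  unfold imp; rw [M.neg_neg, M.oplus_comm]

theorem imp_le_imp_right {y z : A} (u : A) (h : y ≤ₘ z) : u ⇒ₘ y ≤ₘ u ⇒ₘ z :=
  M.oplus_le_oplus_left (¬ₘ u) h

theorem imp_odot_imp_le (x y z : A) : (x ⇒ₘ y) ⊙ₘ (y ⇒ₘ z) ≤ₘ x ⇒ₘ z := by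
  refine M.odot_le_iff_le_imp.mp ?_
  calc (x ⇒ₘ y) ⊙ₘ (y ⇒ₘ z) ⊙ₘ x = (y ⇒ₘ z) ⊙ₘ (x ⊙ₘ (x ⇒ₘ y)) := by
        rw [M.odot_comm (x ⇒ₘ y), ← M.odot_assoc, M.odot_comm (x ⇒ₘ y) x]
    _ ≤ₘ (y ⇒ₘ z) ⊙ₘ y := M.odot_le_odot_left _ (M.odot_imp_le x y)
    _ ≤ₘ z := by rw [M.odot_comm]; exact M.odot_imp_le y z

theorem oplus_odot_le (u v e : A) : (u ⊕ₘ v) ⊙ₘ e ≤ₘ u ⊙ₘ e ⊕ₘ v := by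
  refine M.odot_le_iff_le_imp.mpr ?_
  have h : e ⇒ₘ u ⊙ₘ e ⊕ₘ v = u ⊔ₘ ¬ₘ e ⊕ₘ v := by
    unfold imp
    rw [← M.odot_oplus_neg, M.oplus_comm _ (¬ₘ e), M.oplus_assoc]
  rw [h]
  exact M.oplus_le_oplus_right v (M.le_sup_left u _)

theorem imp_le_oplus_imp_oplus (x x' y : A) : x ⇒ₘ x' ≤ₘ x ⊕ₘ y ⇒ₘ x' ⊕ₘ y := by
  refine M.odot_le_iff_le_imp.mp ?_
  calc (x ⇒ₘ x') ⊙ₘ (x ⊕ₘ y) ≤ₘ x ⊙ₘ (x ⇒ₘ x') ⊕ₘ y := by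
        rw [M.odot_comm]; exact M.oplus_odot_le x y _
    _ ≤ₘ x' ⊕ₘ y := M.oplus_le_oplus_right y (M.odot_imp_le x x')

theorem neg_le_iff_oplus_eq_one {x y : A} : ¬ₘ x ≤ₘ y ↔ x ⊕ₘ y = M.one := by
  unfold le imp; rw [M.neg_neg]

theorem oplus_eq_one_of_sup_eq_one {x y : A} (h : x ⊔ₘ y = M.one) : x ⊕ₘ y = M.one :=
  M.eq_one_of_one_le (h ▸ M.sup_le (M.le_self_oplus x y) (M.le_oplus_self y x))

protected theorem pow_one (x : A) : M.pow x 1 = x := M.odot_one x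

protected theorem pow_add (x : A) (j k : ℕ) : M.pow x (j + k) = M.pow x j ⊙ₘ M.pow x k := by
  induction j with
  | zero => rw [Nat.zero_add, pow, M.odot_comm, M.odot_one]
  | succ j ih => rw [Nat.succ_add, pow, pow, ih, M.odot_assoc]

theorem pow_sup_eq_one {a b : A} (h : a ⊔ₘ b = M.one) (k : ℕ) : M.pow a k ⊔ₘ b = M.one := by
  induction k with
  | zero => exact M.sup_eq_left (M.le_one b)
  | succ k ih =>
    have key : (M.pow a k ⊔ₘ b) ⊙ₘ (a ⊔ₘ b) ≤ₘ M.pow a (k + 1) ⊔ₘ b := by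
      have hb : ∀ c, c ⊙ₘ b ≤ₘ M.pow a (k + 1) ⊔ₘ b :=
        fun c => M.le_trans (M.odot_le_right c b) (M.le_sup_right _ _)
      rw [M.odot_sup]
      refine M.sup_le ?_ (hb _)
      rw [M.odot_comm, M.odot_sup]
      exact M.sup_le (M.le_sup_left _ _) (hb a)
    rw [h, ih, M.odot_one] at key
    exact M.eq_one_of_one_le key

theorem imp_odot_imp_imp_le (a c y z : A) :
    (a ⇒ₘ y) ⊙ₘ (c ⇒ₘ y ⇒ₘ z) ≤ₘ a ⊙ₘ c ⇒ₘ z := by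
  refine M.odot_le_iff_le_imp.mp ?_
  calc (a ⇒ₘ y) ⊙ₘ (c ⇒ₘ y ⇒ₘ z) ⊙ₘ (a ⊙ₘ c)
        = (a ⇒ₘ y) ⊙ₘ a ⊙ₘ ((c ⇒ₘ y ⇒ₘ z) ⊙ₘ c) := M.odot_odot_odot_comm _ _ _ _
    _ ≤ₘ y ⊙ₘ (y ⇒ₘ z) := M.odot_le_odot (M.imp_odot_le a y) (M.imp_odot_le c _)
    _ ≤ₘ z := M.odot_imp_le y z

variable {M} {F : Set A}

theorem _root_.IsMVFilter.mem_of_le (hF : IsMVFilter M F) {x y : A} (hx : x ∈ F) (h : x ≤ₘ y) :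
    y ∈ F :=
  hF.2.1 x y hx h

theorem _root_.IsMVFilter.mem_of_imp_mem (hF : IsMVFilter M F) {x y : A} (hx : x ∈ F)
    (h : x ⇒ₘ y ∈ F) : y ∈ F :=
  hF.2.2 x y hx h

theorem _root_.IsMVFilter.one_mem (hF : IsMVFilter M F) : M.one ∈ F :=
  hF.1.elim fun x hx => hF.mem_of_le hx (M.le_one x)

theorem _root_.IsMVFilter.odot_mem (hF : IsMVFilter M F) {x y : A} (hx : x ∈ F) (hy : y ∈ F) :
    x ⊙ₘ y ∈ F :=
  hF.mem_of_imp_mem hy (hF.mem_of_le hx (M.odot_le_iff_le_imp.mp (M.le_refl _)))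

theorem _root_.IsMVFilter.pow_mem (hF : IsMVFilter M F) {x : A} (hx : x ∈ F) (k : ℕ) :
    M.pow x k ∈ F := by
  induction k with
  | zero => exact hF.one_mem
  | succ k ih => exact hF.odot_mem hx ih

theorem _root_.IsMVFilter.eq_univ_of_zero_mem (hF : IsMVFilter M F) (h : M.zero ∈ F) :
    F = Set.univ :=
  Set.eq_univ_of_forall fun y => hF.mem_of_le h (M.zero_le y)

theorem _root_.IsMVFilter.imp_mem_trans (hF : IsMVFilter M F) {x y z : A} (h₁ : x ⇒ₘ y ∈ F)
    (h₂ : y ⇒ₘ z ∈ F) : x ⇒ₘ z ∈ F :=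
  hF.mem_of_le (hF.odot_mem h₁ h₂) (M.imp_odot_imp_le x y z)

variable (M) in
/-- The filter generated by `F ∪ {x}`. -/
def adjoin (F : Set A) (x : A) : Set A := {y | ∃ k, M.pow x k ⇒ₘ y ∈ F}

theorem _root_.IsMVFilter.adjoin (hF : IsMVFilter M F) (x : A) : IsMVFilter M (M.adjoin F x) := by
  refine ⟨⟨M.one, 0, ?_⟩, ?_, ?_⟩
  · rw [pow, M.imp_one_left]; exact hF.one_mem
  · rintro y z ⟨k, hk⟩ hyz
    exact ⟨k, hF.mem_of_le hk (M.imp_le_imp_right _ hyz)⟩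
  · rintro y z ⟨j, hj⟩ ⟨k, hk⟩
    refine ⟨j + k, hF.mem_of_le (hF.odot_mem hj hk) ?_⟩
    rw [M.pow_add]
    exact M.imp_odot_imp_imp_le _ _ y z

end Filter

section Quotient

variable {M} {F : Set A}

theorem _root_.IsMVFilter.oplus_imp_oplus_mem (hF : IsMVFilter M F) {x x' y y' : A}
    (hx : x ⇒ₘ x' ∈ F) (hy : y ⇒ₘ y' ∈ F) : x ⊕ₘ y ⇒ₘ x' ⊕ₘ y' ∈ F := by
  refine hF.imp_mem_trans (hF.mem_of_le hx (M.imp_le_oplus_imp_oplus x x' y)) ?_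
  rw [M.oplus_comm x', M.oplus_comm x']
  exact hF.mem_of_le hy (M.imp_le_oplus_imp_oplus y y' x')

variable (M) in
def filterSetoid (hF : IsMVFilter M F) : Setoid A where
  r x y := x ⇒ₘ y ∈ F ∧ y ⇒ₘ x ∈ F
  iseqv :=
    { refl := fun x => by rw [M.imp_self]; exact ⟨hF.one_mem, hF.one_mem⟩
      symm := And.symm
      trans := fun h₁ h₂ => ⟨hF.imp_mem_trans h₁.1 h₂.1, hF.imp_mem_trans h₂.2 h₁.2⟩ }

variable (M) in
def quotient (hF : IsMVFilter M F) : MVAlg (Quotient (M.filterSetoid hF)) where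
  oplus := Quotient.map₂ M.oplus fun _ _ hx _ _ hy =>
    ⟨hF.oplus_imp_oplus_mem hx.1 hy.1, hF.oplus_imp_oplus_mem hx.2 hy.2⟩
  neg := Quotient.map M.neg fun _ _ h => by
    constructor <;> rw [M.neg_imp_neg] <;> [exact h.2; exact h.1]
  zero := Quotient.mk _ M.zero
  oplus_assoc := by
    rintro ⟨x⟩ ⟨y⟩ ⟨z⟩; exact congrArg (Quotient.mk _) (M.oplus_assoc x y z)
  oplus_comm := by
    rintro ⟨x⟩ ⟨y⟩; exact congrArg (Quotient.mk _) (M.oplus_comm x y)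
  oplus_zero := by
    rintro ⟨x⟩; exact congrArg (Quotient.mk _) (M.oplus_zero x)
  neg_neg := by
    rintro ⟨x⟩; exact congrArg (Quotient.mk _) (M.neg_neg x)
  oplus_one := by
    rintro ⟨x⟩; exact congrArg (Quotient.mk _) (M.oplus_one x)
  luk := by
    rintro ⟨x⟩ ⟨y⟩; exact congrArg (Quotient.mk _) (M.luk x y)

theorem quotient_pow_mk (hF : IsMVFilter M F) (x : A) (k : ℕ) :
    (M.quotient hF).pow (Quotient.mk _ x) k = Quotient.mk _ (M.pow x k) := by
  induction k with
  | zero => rfl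
  | succ k ih => rw [pow, ih]; rfl

theorem quotient_mk_eq_one_iff (hF : IsMVFilter M F) {x : A} :
    Quotient.mk (M.filterSetoid hF) x = (M.quotient hF).one ↔ x ∈ F := by
  refine Quotient.eq.trans ⟨fun h => ?_, fun h => ⟨?_, ?_⟩⟩
  · simpa only [M.neg_zero, M.imp_one_left] using h.2
  · exact (M.le_one x).symm ▸ hF.one_mem
  · rwa [M.neg_zero, M.imp_one_left]

theorem quotient_le_mk_iff (hF : IsMVFilter M F) {x y : A} :
    (M.quotient hF).le (Quotient.mk _ x) (Quotient.mk _ y) ↔ x ⇒ₘ y ∈ F :=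
  quotient_mk_eq_one_iff hF

theorem quotient_zero_ne_one (hF : IsMVFilter M F) (hne : F ≠ Set.univ) :
    (M.quotient hF).zero ≠ (M.quotient hF).one := fun h =>
  hne (hF.eq_univ_of_zero_mem ((quotient_mk_eq_one_iff hF).mp h))

end Quotient

section Maximal

protected def IsChain : Prop := ∀ x y : A, x ≤ₘ y ∨ y ≤ₘ x

/-- For MV-algebras, local finiteness is the same as simplicity. -/
def IsLocallyFinite : Prop := ∀ x : A, x ≠ M.one → ∃ k, M.pow x k = M.zero

variable {M} {F : Set A}

theorem _root_.IsMaximalMVFilter.exists_neg_pow_mem (hmax : IsMaximalMVFilter M F) {x : A}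
    (hx : x ∉ F) : ∃ k, ¬ₘ M.pow x k ∈ F := by
  by_contra h
  have hproper : M.adjoin F x ≠ Set.univ := fun hU => by
    obtain ⟨k, hk⟩ : M.zero ∈ M.adjoin F x := hU ▸ Set.mem_univ _
    exact h ⟨k, by rwa [M.imp_zero] at hk⟩
  have hFG : F ⊆ M.adjoin F x := fun y hy => ⟨0, by rwa [pow, M.imp_one_left]⟩
  have hxG : x ∈ M.adjoin F x := ⟨1, by rw [M.pow_one, M.imp_self]; exact hmax.1.one_mem⟩
  exact hx (hmax.2.2 _ (hmax.1.adjoin x) hproper hFG ▸ hxG)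

theorem _root_.IsMaximalMVFilter.imp_mem_or_imp_mem (hmax : IsMaximalMVFilter M F) (x y : A) :
    x ⇒ₘ y ∈ F ∨ y ⇒ₘ x ∈ F := by
  refine or_iff_not_imp_left.mpr fun h => ?_
  obtain ⟨k, hk⟩ := hmax.exists_neg_pow_mem h
  exact hmax.1.mem_of_le hk (M.neg_le_iff_oplus_eq_one.mpr
    (M.oplus_eq_one_of_sup_eq_one (M.pow_sup_eq_one (M.imp_sup_imp x y) k)))

theorem _root_.IsMaximalMVFilter.quotient_isChain (hmax : IsMaximalMVFilter M F) :
    (M.quotient hmax.1).IsChain :=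
  Quotient.ind₂ fun x y => by
    simpa only [quotient_le_mk_iff] using hmax.imp_mem_or_imp_mem x y

theorem _root_.IsMaximalMVFilter.quotient_isLocallyFinite (hmax : IsMaximalMVFilter M F) :
    (M.quotient hmax.1).IsLocallyFinite := by
  refine Quotient.ind fun x hx => ?_
  obtain ⟨k, hk⟩ := hmax.exists_neg_pow_mem fun h => hx ((quotient_mk_eq_one_iff hmax.1).mpr h)
  refine ⟨k, ?_⟩
  rw [quotient_pow_mk]
  refine Quotient.sound ⟨by rwa [M.imp_zero], ?_⟩
  exact (M.zero_le _ : M.zero ⇒ₘ _ = M.one).symm ▸ hmax.1.one_mem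

end Maximal

section Chain

theorem oplus_odot_assoc {a b c : A} (hab : a ≤ₘ ¬ₘ b) (hbc : ¬ₘ b ≤ₘ c) :
    (a ⊕ₘ b) ⊙ₘ c = a ⊕ₘ b ⊙ₘ c := by
  have hcb : ¬ₘ c ≤ₘ b := M.neg_le_comm.mp hbc
  refine M.oplus_neg_cancel (M.odot_le_right _ _) ?_ ?_
  · calc a ⊕ₘ b ⊙ₘ c ≤ₘ ¬ₘ b ⊕ₘ b ⊙ₘ c := M.oplus_le_oplus_right _ hab
      _ = c := by rw [M.oplus_comm, M.odot_comm, M.odot_oplus_neg, M.sup_eq_left hbc]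
  · rw [M.odot_oplus_neg, M.sup_eq_left (M.le_trans hcb (M.le_oplus_self b a)),
      ← M.oplus_assoc, M.odot_oplus_neg, M.sup_eq_left hcb]

theorem odot_eq_zero_iff {x y : A} : x ⊙ₘ y = M.zero ↔ x ≤ₘ ¬ₘ y := by
  rw [← M.imp_zero, ← M.odot_le_iff_le_imp]
  exact ⟨fun h => h ▸ M.le_refl _, fun h => M.le_antisymm h (M.zero_le _)⟩

variable {M}

theorem IsChain.le_neg_of_oplus_ne_one (hM : M.IsChain) {x y : A} (h : x ⊕ₘ y ≠ M.one) :
    x ≤ₘ ¬ₘ y :=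
  (hM x (¬ₘ y)).resolve_right fun h' =>
    h (M.eq_one_of_one_le (M.neg_oplus_self y ▸ M.oplus_le_oplus_right y h'))

theorem IsChain.oplus_odot_eq_odot_oplus (hM : M.IsChain) {a b c : A} (hab : a ≤ₘ ¬ₘ b)
    (hcb : c ≤ₘ ¬ₘ b) : (a ⊕ₘ b) ⊙ₘ c = a ⊙ₘ (b ⊕ₘ c) := by
  by_cases hq : a ⊕ₘ b ⊕ₘ c = M.one
  · have hba : b ≤ₘ ¬ₘ a := M.le_neg_comm.mp hab
    refine M.oplus_neg_cancel (c := a) ?_ (M.odot_le_left _ _) ?_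
    · calc (a ⊕ₘ b) ⊙ₘ c ≤ₘ (b ⊕ₘ a) ⊙ₘ ¬ₘ b := by
            rw [M.oplus_comm a]; exact M.odot_le_odot_left _ hcb
        _ ≤ₘ a := by rw [M.oplus_odot_neg]; exact M.inf_le_left _ _
    have hq' : ¬ₘ (a ⊕ₘ b) ≤ₘ c := M.neg_le_iff_oplus_eq_one.mpr hq
    have hs : ¬ₘ a ≤ₘ b ⊕ₘ c := M.neg_le_iff_oplus_eq_one.mpr (by rwa [M.oplus_assoc])
    have hna : ¬ₘ (a ⊕ₘ b) ⊕ₘ b = ¬ₘ a := by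
      rw [M.neg_oplus, ← M.sup_eq_odot_oplus, M.sup_eq_left hba]
    have h₁ : (a ⊕ₘ b) ⊙ₘ c ⊕ₘ ¬ₘ a = b ⊕ₘ c := by
      rw [← hna, M.oplus_assoc, M.odot_comm, M.odot_oplus_neg, M.sup_eq_left hq', M.oplus_comm]
    have h₂ : a ⊙ₘ (b ⊕ₘ c) ⊕ₘ ¬ₘ a = b ⊕ₘ c := by
      rw [M.odot_comm, M.odot_oplus_neg, M.sup_eq_left hs]
    rw [h₁, h₂]
  · rw [(M.odot_eq_zero_iff).mpr (hM.le_neg_of_oplus_ne_one hq),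
      (M.odot_eq_zero_iff).mpr (hM.le_neg_of_oplus_ne_one (by rwa [M.oplus_assoc]))]

theorem IsChain.odot_oplus_eq_oplus_odot (hM : M.IsChain) {a b c : A} (hab : ¬ₘ a ≤ₘ b)
    (hbc : ¬ₘ b ≤ₘ c) : a ⊙ₘ b ⊕ₘ c = a ⊕ₘ b ⊙ₘ c := by
  refine M.neg_injective ?_
  rw [M.neg_oplus, M.neg_odot, M.neg_oplus, M.neg_odot]
  exact hM.oplus_odot_eq_odot_oplus (by rwa [M.neg_neg])
    (by rw [M.neg_neg]; exact M.neg_le_comm.mp hbc)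

end Chain

section Carry

theorem odot_ne_one {a : A} (ha : a ≠ M.one) (b : A) : a ⊙ₘ b ≠ M.one := fun h =>
  ha (M.eq_one_of_one_le (h ▸ M.odot_le_left a b))

theorem neg_ne_one {a : A} (ha : a ≠ M.zero) : ¬ₘ a ≠ M.one := fun h =>
  ha (M.neg_injective (h.trans M.neg_zero.symm))

theorem oplus_odot_eq_one_of_odot_oplus_eq_one {a b c : A} (hab : ¬ₘ a ≤ₘ b)
    (h : a ⊙ₘ b ⊕ₘ c = M.one) : a ⊕ₘ b ⊙ₘ c = M.one := by
  rw [M.oplus_comm, ← M.neg_le_iff_oplus_eq_one, M.neg_odot]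
  have hc : ¬ₘ c ≤ₘ a ⊙ₘ b := M.neg_le_iff_oplus_eq_one.mpr (by rwa [M.oplus_comm])
  calc ¬ₘ b ⊕ₘ ¬ₘ c ≤ₘ ¬ₘ b ⊕ₘ a ⊙ₘ b := M.oplus_le_oplus_left _ hc
    _ = a := by rw [M.oplus_comm, M.odot_oplus_neg, M.sup_eq_left (M.neg_le_comm.mp hab)]

open Classical in
/-- The integer part of `a + b` in `[0, 2)`, for `a, b` in an MV-chain. -/
noncomputable def carry (a b : A) : ℤ := if a ⊕ₘ b = M.one then 1 else 0

open Classical in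
/-- The fractional part of `a + b` in `[0, 2)`, for `a, b` in an MV-chain. -/
noncomputable def fractAdd (a b : A) : A := if a ⊕ₘ b = M.one then a ⊙ₘ b else a ⊕ₘ b

variable {M}

theorem carry_of_eq_one {a b : A} (h : a ⊕ₘ b = M.one) : M.carry a b = 1 := if_pos h

theorem carry_of_ne_one {a b : A} (h : a ⊕ₘ b ≠ M.one) : M.carry a b = 0 := if_neg h

theorem fractAdd_of_eq_one {a b : A} (h : a ⊕ₘ b = M.one) : M.fractAdd a b = a ⊙ₘ b :=
  if_pos h

theorem fractAdd_of_ne_one {a b : A} (h : a ⊕ₘ b ≠ M.one) : M.fractAdd a b = a ⊕ₘ b :=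
  if_neg h

theorem carry_comm (a b : A) : M.carry a b = M.carry b a := by
  unfold carry; rw [M.oplus_comm]

theorem fractAdd_comm (a b : A) : M.fractAdd a b = M.fractAdd b a := by
  unfold fractAdd; rw [M.oplus_comm, M.odot_comm]

theorem carry_nonneg (a b : A) : 0 ≤ M.carry a b := by
  unfold carry; split_ifs <;> norm_num

theorem carry_le_one (a b : A) : M.carry a b ≤ 1 := by
  unfold carry; split_ifs <;> norm_num

theorem fractAdd_ne_one {a : A} (ha : a ≠ M.one) (b : A) : M.fractAdd a b ≠ M.one := by
  unfold fractAdd; split_ifs with h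
  exacts [M.odot_ne_one ha b, h]

theorem IsChain.carry_fractAdd_assoc_of_carry_of_carry (hM : M.IsChain) {a b c : A}
    (hp : a ⊕ₘ b = M.one) (hr : b ⊕ₘ c = M.one) :
    (M.carry a b + M.carry (M.fractAdd a b) c, M.fractAdd (M.fractAdd a b) c) =
      (M.carry b c + M.carry a (M.fractAdd b c), M.fractAdd a (M.fractAdd b c)) := by
  rw [carry_of_eq_one hp, fractAdd_of_eq_one hp, carry_of_eq_one hr, fractAdd_of_eq_one hr]
  by_cases hq : a ⊙ₘ b ⊕ₘ c = M.one
  · have hs := M.oplus_odot_eq_one_of_odot_oplus_eq_one (M.neg_le_iff_oplus_eq_one.mpr hp) hq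
    rw [carry_of_eq_one hq, fractAdd_of_eq_one hq, carry_of_eq_one hs,
      fractAdd_of_eq_one hs, M.odot_assoc]
  · have hs : a ⊕ₘ b ⊙ₘ c ≠ M.one := fun hs => hq <| by
      rw [M.oplus_comm, M.odot_comm] at hs ⊢
      exact M.oplus_odot_eq_one_of_odot_oplus_eq_one (M.neg_le_iff_oplus_eq_one.mpr
        (by rwa [M.oplus_comm])) hs
    rw [carry_of_ne_one hq, fractAdd_of_ne_one hq, carry_of_ne_one hs, fractAdd_of_ne_one hs,
      hM.odot_oplus_eq_oplus_odot (M.neg_le_iff_oplus_eq_one.mpr hp)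
        (M.neg_le_iff_oplus_eq_one.mpr hr)]

theorem IsChain.carry_fractAdd_assoc_of_not_carry (hM : M.IsChain) {a b c : A}
    (hp : a ⊕ₘ b ≠ M.one) :
    (M.carry a b + M.carry (M.fractAdd a b) c, M.fractAdd (M.fractAdd a b) c) =
      (M.carry b c + M.carry a (M.fractAdd b c), M.fractAdd a (M.fractAdd b c)) := by
  have hab := hM.le_neg_of_oplus_ne_one hp
  rw [carry_of_ne_one hp, fractAdd_of_ne_one hp]
  by_cases hr : b ⊕ₘ c = M.one
  · have hq : a ⊕ₘ b ⊕ₘ c = M.one :=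
      M.eq_one_of_one_le (hr ▸ M.oplus_le_oplus_right c (M.le_oplus_self b a))
    have hs : a ⊕ₘ b ⊙ₘ c ≠ M.one := fun hs =>
      hp (M.eq_one_of_one_le (hs ▸ M.oplus_le_oplus_left a (M.odot_le_left b c)))
    rw [carry_of_eq_one hr, fractAdd_of_eq_one hr, carry_of_eq_one hq, fractAdd_of_eq_one hq,
      carry_of_ne_one hs, fractAdd_of_ne_one hs,
      M.oplus_odot_assoc hab (M.neg_le_iff_oplus_eq_one.mpr hr)]
    rfl
  rw [carry_of_ne_one hr, fractAdd_of_ne_one hr]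
  by_cases hq : a ⊕ₘ b ⊕ₘ c = M.one
  · have hs : a ⊕ₘ (b ⊕ₘ c) = M.one := by rwa [M.oplus_assoc]
    rw [carry_of_eq_one hq, fractAdd_of_eq_one hq, carry_of_eq_one hs, fractAdd_of_eq_one hs,
      hM.oplus_odot_eq_odot_oplus hab (M.le_neg_comm.mp (hM.le_neg_of_oplus_ne_one hr))]
  · have hs : a ⊕ₘ (b ⊕ₘ c) ≠ M.one := by rwa [M.oplus_assoc]
    rw [carry_of_ne_one hq, fractAdd_of_ne_one hq, carry_of_ne_one hs, fractAdd_of_ne_one hs,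
      M.oplus_assoc]

theorem IsChain.carry_fractAdd_assoc (hM : M.IsChain) (a b c : A) :
    (M.carry a b + M.carry (M.fractAdd a b) c, M.fractAdd (M.fractAdd a b) c) =
      (M.carry b c + M.carry a (M.fractAdd b c), M.fractAdd a (M.fractAdd b c)) := by
  by_cases hp : a ⊕ₘ b = M.one
  · by_cases hr : b ⊕ₘ c = M.one
    · exact hM.carry_fractAdd_assoc_of_carry_of_carry hp hr
    -- the mirror image `(c, b, a)` has no carry in `c ⊕ b`
    have := hM.carry_fractAdd_assoc_of_not_carry (a := c) (c := a) (by rwa [M.oplus_comm])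
    simp only [carry_comm, fractAdd_comm] at this ⊢
    exact this.symm
  · exact hM.carry_fractAdd_assoc_of_not_carry hp

end Carry

section ChangGroup

/-- Chang's group of an MV-chain: `⟨n, a⟩` stands for `n + a` with `a ∈ [0, 1)`. -/
@[ext]
structure ChangGroup where
  int : ℤ
  frac : A
  frac_ne_one : frac ≠ M.one

namespace ChangGroup

variable {M}

noncomputable instance : Add M.ChangGroup :=
  ⟨fun x y => ⟨x.int + y.int + M.carry x.frac y.frac, M.fractAdd x.frac y.frac,
    M.fractAdd_ne_one x.frac_ne_one _⟩⟩

theorem int_add (x y : M.ChangGroup) : (x + y).int = x.int + y.int + M.carry x.frac y.frac :=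
  rfl

theorem frac_add (x y : M.ChangGroup) : (x + y).frac = M.fractAdd x.frac y.frac := rfl

instance : LE M.ChangGroup :=
  ⟨fun x y => x.int < y.int ∨ x.int = y.int ∧ x.frac ≤ₘ y.frac⟩

theorem le_iff_int_le_of_frac_eq_zero {x y : M.ChangGroup} (hx : x.frac = M.zero) :
    x ≤ y ↔ x.int ≤ y.int :=
  ⟨by rintro (h | ⟨h, -⟩) <;> omega,
    fun h => h.lt_or_eq.imp id fun h => ⟨h, hx ▸ M.zero_le _⟩⟩

protected theorem add_comm (x y : M.ChangGroup) : x + y = y + x := by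
  ext
  · rw [int_add, int_add, carry_comm, add_comm x.int]
  · rw [frac_add, frac_add, fractAdd_comm]

theorem add_le_add_right_of_int_lt {x y : M.ChangGroup} (h : x.int < y.int) (z : M.ChangGroup) :
    x + z ≤ y + z := by
  have hy0 := M.carry_nonneg y.frac z.frac
  have hx1 := M.carry_le_one x.frac z.frac
  by_cases hx : x.frac ⊕ₘ z.frac = M.one
  · by_cases hy : y.frac ⊕ₘ z.frac ≠ M.one ∧ y.int = x.int + 1
    · refine Or.inr ⟨?_, ?_⟩
      · rw [int_add, int_add, carry_of_eq_one hx, carry_of_ne_one hy.1, hy.2]; ring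
      · rw [frac_add, frac_add, fractAdd_of_eq_one hx, fractAdd_of_ne_one hy.1]
        exact M.le_trans (M.odot_le_right _ _) (M.le_oplus_self _ _)
    refine Or.inl ?_
    rw [int_add, int_add, carry_of_eq_one hx]
    by_cases hy' : y.frac ⊕ₘ z.frac = M.one
    · rw [carry_of_eq_one hy']; omega
    · have hy'' : y.int ≠ x.int + 1 := fun h => hy ⟨hy', h⟩
      rw [carry_of_ne_one hy']; omega
  · refine Or.inl ?_
    rw [int_add, int_add, carry_of_ne_one hx]; omega

theorem add_le_add_right_of_int_eq {x y : M.ChangGroup} (h : x.int = y.int)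
    (hle : x.frac ≤ₘ y.frac) (z : M.ChangGroup) : x + z ≤ y + z := by
  by_cases hx : x.frac ⊕ₘ z.frac = M.one
  · have hy : y.frac ⊕ₘ z.frac = M.one :=
      M.eq_one_of_one_le (hx ▸ M.oplus_le_oplus_right _ hle)
    refine Or.inr ⟨?_, ?_⟩
    · rw [int_add, int_add, carry_of_eq_one hx, carry_of_eq_one hy, h]
    · rw [frac_add, frac_add, fractAdd_of_eq_one hx, fractAdd_of_eq_one hy]
      exact M.odot_le_odot_right _ hle
  by_cases hy : y.frac ⊕ₘ z.frac = M.one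
  · refine Or.inl ?_
    rw [int_add, int_add, carry_of_ne_one hx, carry_of_eq_one hy, h]; omega
  · refine Or.inr ⟨?_, ?_⟩
    · rw [int_add, int_add, carry_of_ne_one hx, carry_of_ne_one hy, h]
    · rw [frac_add, frac_add, fractAdd_of_ne_one hx, fractAdd_of_ne_one hy]
      exact M.oplus_le_oplus_right _ hle

protected theorem add_le_add_right {x y : M.ChangGroup} (h : x ≤ y) (z : M.ChangGroup) :
    x + z ≤ y + z :=
  h.elim (add_le_add_right_of_int_lt · z) fun h => add_le_add_right_of_int_eq h.1 h.2 z

variable [Fact (M.zero ≠ M.one)]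

instance : Zero M.ChangGroup := ⟨⟨0, M.zero, Fact.out⟩⟩

instance : One M.ChangGroup := ⟨⟨1, M.zero, Fact.out⟩⟩

theorem int_zero : (0 : M.ChangGroup).int = 0 := rfl

theorem frac_zero : (0 : M.ChangGroup).frac = M.zero := rfl

theorem int_one : (1 : M.ChangGroup).int = 1 := rfl

open Classical in
noncomputable instance : Neg M.ChangGroup :=
  ⟨fun x => if h : x.frac = M.zero then ⟨-x.int, M.zero, Fact.out⟩
    else ⟨-x.int - 1, ¬ₘ x.frac, M.neg_ne_one h⟩⟩

protected theorem add_zero (x : M.ChangGroup) : x + 0 = x := by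
  have h : x.frac ⊕ₘ M.zero ≠ M.one := by rw [M.oplus_zero]; exact x.frac_ne_one
  ext
  · rw [int_add, frac_zero, carry_of_ne_one h, int_zero, add_zero, add_zero]
  · rw [frac_add, frac_zero, fractAdd_of_ne_one h, M.oplus_zero]

protected theorem neg_add_cancel (x : M.ChangGroup) : -x + x = 0 := by
  by_cases h : x.frac = M.zero
  · have hc : M.zero ⊕ₘ x.frac ≠ M.one := by rw [h, M.oplus_zero]; exact Fact.out
    rw [show -x = ⟨-x.int, M.zero, Fact.out⟩ from dif_pos h]
    ext
    · rw [int_add, carry_of_ne_one hc, int_zero]; dsimp only; ring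
    · rw [frac_add, fractAdd_of_ne_one hc, M.zero_oplus, h, frac_zero]
  · have hc : ¬ₘ x.frac ⊕ₘ x.frac = M.one := M.neg_oplus_self _
    rw [show -x = ⟨-x.int - 1, ¬ₘ x.frac, M.neg_ne_one h⟩ from dif_neg h]
    ext
    · rw [int_add, carry_of_eq_one hc, int_zero]; dsimp only; ring
    · rw [frac_add, fractAdd_of_eq_one hc, M.odot_comm, M.odot_neg_self, frac_zero]

open Classical in
variable (M) in
noncomputable def of (a : A) : M.ChangGroup := if h : a = M.one then 1 else ⟨0, a, h⟩

theorem of_of_ne_one {a : A} (h : a ≠ M.one) : of M a = ⟨0, a, h⟩ := dif_neg h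

variable (M) in
theorem of_one : of M M.one = 1 := dif_pos rfl

variable (M) in
theorem of_zero : of M M.zero = 0 := of_of_ne_one Fact.out

theorem zero_le_of (a : A) : 0 ≤ of M a := by
  by_cases h : a = M.one
  · rw [h, of_one]; exact Or.inl zero_lt_one
  · rw [of_of_ne_one h]; exact Or.inr ⟨rfl, M.zero_le a⟩

theorem of_le_one (a : A) : of M a ≤ 1 := by
  by_cases h : a = M.one
  · rw [h, of_one]; exact Or.inr ⟨rfl, M.le_refl _⟩
  · rw [of_of_ne_one h]; exact Or.inl zero_lt_one

variable (M) in
theorem of_injective : Function.Injective (of M) := by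
  intro a b hab
  by_cases ha : a = M.one <;> by_cases hb : b = M.one
  · rw [ha, hb]
  · rw [ha, of_one, of_of_ne_one hb] at hab
    exact absurd (congrArg ChangGroup.int hab) one_ne_zero
  · rw [hb, of_one, of_of_ne_one ha] at hab
    exact absurd (congrArg ChangGroup.int hab) zero_ne_one
  · rw [of_of_ne_one ha, of_of_ne_one hb] at hab
    exact congrArg ChangGroup.frac hab

variable [hM : Fact M.IsChain]

noncomputable instance : AddCommGroup M.ChangGroup where
  add_assoc x y z := by
    have h := hM.out.carry_fractAdd_assoc x.frac y.frac z.frac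
    simp only [Prod.mk.injEq] at h
    ext
    · simp only [int_add, frac_add]; linarith [h.1]
    · exact h.2
  zero_add x := (ChangGroup.add_comm 0 x).trans (ChangGroup.add_zero x)
  add_zero := ChangGroup.add_zero
  add_comm := ChangGroup.add_comm
  neg_add_cancel := ChangGroup.neg_add_cancel
  nsmul := nsmulRec
  zsmul := zsmulRec

noncomputable instance : LinearOrder M.ChangGroup where
  le_refl x := Or.inr ⟨rfl, M.le_refl _⟩
  le_trans x y z := by
    rintro (hxy | ⟨hxy, hxy'⟩) (hyz | ⟨hyz, hyz'⟩)
    exacts [Or.inl (hxy.trans hyz), Or.inl (hyz ▸ hxy), Or.inl (hxy ▸ hyz),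
      Or.inr ⟨hxy.trans hyz, M.le_trans hxy' hyz'⟩]
  le_antisymm x y := by
    rintro (hxy | ⟨hxy, hxy'⟩) (hyx | ⟨hyx, hyx'⟩)
    any_goals omega
    exact ChangGroup.ext hxy (M.le_antisymm hxy' hyx')
  le_total x y := by
    rcases lt_trichotomy x.int y.int with h | h | h
    · exact Or.inl (Or.inl h)
    · exact (hM.out x.frac y.frac).imp (fun h' => Or.inr ⟨h, h'⟩) fun h' => Or.inr ⟨h.symm, h'⟩
    · exact Or.inr (Or.inl h)
  toDecidableLE := Classical.decRel _

instance : IsOrderedAddMonoid M.ChangGroup where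
  add_le_add_left _ _ h z := ChangGroup.add_le_add_right h z

instance : ZeroLEOneClass M.ChangGroup := ⟨Or.inl zero_lt_one⟩

instance : NeZero (1 : M.ChangGroup) :=
  ⟨fun h => one_ne_zero (congrArg ChangGroup.int h : (1 : ℤ) = 0)⟩

protected theorem nsmul_one (n : ℕ) : n • (1 : M.ChangGroup) = ⟨n, M.zero, Fact.out⟩ := by
  induction n with
  | zero => rfl
  | succ n ih =>
    have h : M.zero ⊕ₘ M.zero ≠ M.one := by rw [M.oplus_zero]; exact Fact.out
    rw [succ_nsmul, ih]
    ext
    · show (n : ℤ) + 1 + M.carry M.zero M.zero = ((n + 1 : ℕ) : ℤ)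
      rw [carry_of_ne_one h]; push_cast; ring
    · show M.fractAdd M.zero M.zero = M.zero
      rw [fractAdd_of_ne_one h, M.oplus_zero]

theorem exists_le_nsmul_one (x : M.ChangGroup) : ∃ n : ℕ, x ≤ n • 1 :=
  ⟨x.int.toNat + 1, by rw [ChangGroup.nsmul_one]; exact Or.inl (by push_cast; omega)⟩

theorem of_add_of_neg (a : A) : of M a + of M (¬ₘ a) = 1 := by
  by_cases ha : a = M.one
  · rw [ha, M.neg_one, of_one, of_zero, add_zero]
  by_cases ha' : a = M.zero
  · rw [ha', M.neg_zero, of_one, of_zero, zero_add]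
  have hc : a ⊕ₘ ¬ₘ a = M.one := M.oplus_neg_self a
  rw [of_of_ne_one ha, of_of_ne_one (M.neg_ne_one ha')]
  ext
  · rw [int_add, carry_of_eq_one hc]; rfl
  · rw [frac_add, fractAdd_of_eq_one hc, M.odot_neg_self]; rfl

theorem of_neg (a : A) : of M (¬ₘ a) = 1 - of M a :=
  eq_sub_of_add_eq' (of_add_of_neg a)

theorem of_oplus (a b : A) : of M (a ⊕ₘ b) = min 1 (of M a + of M b) := by
  by_cases hab : a ⊕ₘ b = M.one
  · rw [hab, of_one, eq_comm, min_eq_left_iff]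
    by_cases ha : a = M.one
    · rw [ha, of_one]; exact le_add_of_nonneg_right (zero_le_of b)
    by_cases hb : b = M.one
    · rw [hb, of_one]; exact le_add_of_nonneg_left (zero_le_of a)
    rw [of_of_ne_one ha, of_of_ne_one hb]
    refine Or.inr ⟨?_, M.zero_le _⟩
    rw [int_add, carry_of_eq_one hab]; rfl
  · have ha : a ≠ M.one := fun ha => hab (ha ▸ M.one_oplus b)
    have hb : b ≠ M.one := fun hb => hab (hb ▸ M.oplus_one' a)
    have hsum : of M a + of M b = of M (a ⊕ₘ b) := by
      rw [of_of_ne_one ha, of_of_ne_one hb, of_of_ne_one hab]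
      ext
      · rw [int_add, carry_of_ne_one hab]; rfl
      · rw [frac_add, fractAdd_of_ne_one hab]
    rw [hsum, min_eq_right (of_le_one _)]

-- `¬(¬a)^k` is the truncated multiple `a ⊕ ⋯ ⊕ a`.
theorem of_neg_pow_neg_le_nsmul (a : A) (k : ℕ) :
    of M (¬ₘ M.pow (¬ₘ a) k) ≤ k • of M a := by
  induction k with
  | zero => rw [pow, M.neg_one, of_zero, zero_nsmul]
  | succ k ih =>
    rw [pow, M.neg_odot, M.neg_neg, of_oplus, succ_nsmul']
    exact (min_le_right _ _).trans (add_le_add le_rfl ih)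

theorem exists_one_le_nsmul (hlf : M.IsLocallyFinite) {y : M.ChangGroup} (hy : 0 < y) :
    ∃ k : ℕ, 1 ≤ k • y := by
  by_cases h1 : 1 ≤ y
  · exact ⟨1, by rwa [one_nsmul]⟩
  have hint : y.int = 0 := by
    rw [le_iff_int_le_of_frac_eq_zero rfl, int_one] at h1
    have := (le_iff_int_le_of_frac_eq_zero rfl).mp hy.le
    rw [int_zero] at this
    omega
  have hfrac : y.frac ≠ M.zero := fun h => hy.ne' (ChangGroup.ext hint h)
  obtain ⟨k, hk⟩ := hlf _ (M.neg_ne_one hfrac)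
  have hy' : y = of M y.frac := by rw [of_of_ne_one y.frac_ne_one]; exact ChangGroup.ext hint rfl
  refine ⟨k, ?_⟩
  rw [hy', ← of_one, ← M.neg_zero, ← hk]
  exact of_neg_pow_neg_le_nsmul _ k

theorem archimedean (hlf : M.IsLocallyFinite) : Archimedean M.ChangGroup := by
  refine ⟨fun x y hy => ?_⟩
  obtain ⟨k, hk⟩ := exists_one_le_nsmul hlf hy
  obtain ⟨n, hn⟩ := exists_le_nsmul_one x
  exact ⟨n * k, by rw [mul_nsmul']; exact hn.trans (nsmul_le_nsmul_right hk n)⟩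

end ChangGroup

end ChangGroup

theorem exists_injective_isMVHomToI (hne : M.zero ≠ M.one) (hM : M.IsChain)
    (hlf : M.IsLocallyFinite) : ∃ φ : A → ℝ, IsMVHomToI M φ ∧ Function.Injective φ := by
  have : Fact (M.zero ≠ M.one) := ⟨hne⟩
  have : Fact M.IsChain := ⟨hM⟩
  have := ChangGroup.archimedean hlf
  set e := Archimedean.embedReal M.ChangGroup
  have he : e 1 = 1 := Archimedean.embedReal_one
  refine ⟨fun a => e (ChangGroup.of M a), ⟨fun a => ⟨?_, ?_⟩, ?_, fun a b => ?_, fun a => ?_⟩,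
    (Archimedean.embedReal_injective _).comp (ChangGroup.of_injective M)⟩ <;> dsimp only
  · rw [← map_zero e]; exact OrderHomClass.mono e (ChangGroup.zero_le_of a)
  · rw [← he]; exact OrderHomClass.mono e (ChangGroup.of_le_one a)
  · rw [ChangGroup.of_zero M, map_zero]
  · rw [ChangGroup.of_oplus, (OrderHomClass.mono e).map_min, map_add, he]
  · rw [ChangGroup.of_neg, map_sub, he]

section HomToUnitInterval

variable {M} {f g : A → ℝ}

theorem _root_.IsMVHomToI.map_one (hf : IsMVHomToI M f) : f M.one = 1 := by
  rw [MVAlg.one, hf.2.2.2, hf.2.1, sub_zero]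

theorem _root_.IsMVHomToI.map_odot (hf : IsMVHomToI M f) (x y : A) :
    f (x ⊙ₘ y) = max 0 (f x + f y - 1) := by
  rw [odot, hf.2.2.2, hf.2.2.1, hf.2.2.2, hf.2.2.2]
  rcases le_total (f x + f y) 1 with h | h
  · rw [min_eq_left (by linarith), max_eq_left (by linarith)]; ring
  · rw [min_eq_right (by linarith), max_eq_right (by linarith)]; ring

theorem _root_.IsMVHomToI.map_pow_le (hf : IsMVHomToI M f) (x : A) (k : ℕ) :
    f (M.pow x k) ≤ max 0 (1 - k * (1 - f x)) := by
  induction k with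
  | zero => rw [pow, hf.map_one]; simp
  | succ k ih =>
    rw [pow, hf.map_odot]
    refine max_le (le_max_left _ _) ?_
    rcases le_max_iff.mp ih with h | h
    · exact le_max_of_le_left (by linarith [(hf.1 x).2])
    · exact le_max_of_le_right (by push_cast; linarith)

theorem _root_.IsMVHomToI.exists_map_pow_eq_zero (hf : IsMVHomToI M f) {x : A} (hx : f x < 1) :
    ∃ k, f (M.pow x k) = 0 := by
  obtain ⟨k, hk⟩ := exists_nat_ge (1 / (1 - f x))
  refine ⟨k, le_antisymm ((hf.map_pow_le x k).trans (max_le le_rfl ?_)) (hf.1 _).1⟩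
  rw [div_le_iff₀ (by linarith)] at hk
  linarith

variable (M) in
/-- `M.dyadic n j x` is a term whose value under any `IsMVHomToI` map is
`min 1 (max 0 (2 ^ n * f x - j))` (for `j < 2 ^ n`), built from the binary digits of `j`. -/
def dyadic : ℕ → ℕ → A → A
  | 0, _, x => x
  | n + 1, j, x =>
    if j % 2 = 1 then dyadic n (j / 2) x ⊙ₘ dyadic n (j / 2) x
    else dyadic n (j / 2) x ⊕ₘ dyadic n (j / 2) x

theorem _root_.IsMVHomToI.map_dyadic (hf : IsMVHomToI M f) (x : A) {n j : ℕ} (hj : j < 2 ^ n) :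
    f (M.dyadic n j x) = min 1 (max 0 (2 ^ n * f x - j)) := by
  induction n generalizing j with
  | zero =>
    obtain rfl : j = 0 := by simpa using hj
    rw [dyadic, pow_zero, one_mul, Nat.cast_zero, sub_zero, max_eq_right (hf.1 x).1,
      min_eq_right (hf.1 x).2]
  | succ n ih =>
    have hj2 : j / 2 < 2 ^ n := by rw [pow_succ] at hj; omega
    have hsplit : (2 : ℝ) ^ (n + 1) * f x - j = 2 * (2 ^ n * f x - ↑(j / 2)) - ↑(j % 2) := by
      have := congrArg (Nat.cast : ℕ → ℝ) (Nat.div_add_mod j 2)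
      push_cast at this
      rw [pow_succ]; linarith
    rw [dyadic, hsplit]
    split_ifs with hbit
    · rw [hf.map_odot, ih hj2, hbit, Nat.cast_one]
      generalize (2 : ℝ) ^ n * f x - ↑(j / 2) = c
      rcases le_total c 0 with h | h <;> rcases le_total 1 c with h' | h' <;>
        simp only [min_def, max_def] <;> split_ifs <;> linarith
    · rw [hf.2.2.1, ih hj2, Nat.mod_two_ne_one.mp hbit, Nat.cast_zero, sub_zero]
      generalize (2 : ℝ) ^ n * f x - ↑(j / 2) = c
      rcases le_total c 0 with h | h <;> rcases le_total 1 c with h' | h' <;>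
        simp only [min_def, max_def] <;> split_ifs <;> linarith

theorem _root_.IsMVHomToI.le_of_forall_eq_one_imp (hf : IsMVHomToI M f) (hg : IsMVHomToI M g)
    (h : ∀ x, g x = 1 → f x = 1) (x : A) : g x ≤ f x := by
  by_contra! hlt
  obtain ⟨n, hn⟩ := pow_unbounded_of_one_lt (1 / (g x - f x)) one_lt_two
  rw [div_lt_iff₀ (by linarith)] at hn
  -- `2 ^ n * (g x - f x) > 1`, so the threshold `m / 2 ^ n` separates `f x` from `g x`
  set m := ⌊(2 : ℝ) ^ n * g x⌋₊
  have hm₁ : (m : ℝ) ≤ 2 ^ n * g x := Nat.floor_le (by positivity [(hg.1 x).1])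
  have hm₂ : 2 ^ n * g x < m + 1 := Nat.lt_floor_add_one _
  have hm₀ : 1 ≤ m := by
    have : (0 : ℝ) < m := by nlinarith [(hf.1 x).1]
    exact_mod_cast this
  have hmn : m ≤ 2 ^ n := by
    have : (m : ℝ) ≤ 2 ^ n :=
      hm₁.trans (by nlinarith [(hg.1 x).2, pow_pos (two_pos : (0 : ℝ) < 2) n])
    exact_mod_cast this
  have hj : m - 1 < 2 ^ n := by omega
  have hjm : ((m - 1 : ℕ) : ℝ) = m - 1 := by rw [Nat.cast_sub hm₀, Nat.cast_one]
  have hg1 : g (M.dyadic n (m - 1) x) = 1 := by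
    rw [hg.map_dyadic x hj, hjm, max_eq_right (by linarith), min_eq_left (by linarith)]
  have hf1 := h _ hg1
  rw [hf.map_dyadic x hj, hjm] at hf1
  have : min 1 (max 0 (2 ^ n * f x - (m - 1))) < 1 :=
    min_lt_of_right_lt (max_lt one_pos (by linarith))
  exact this.ne hf1

theorem _root_.IsMVHomToI.eq_of_forall_eq_one_iff (hf : IsMVHomToI M f) (hg : IsMVHomToI M g)
    (h : ∀ x, f x = 1 ↔ g x = 1) : f = g :=
  funext fun x => le_antisymm (hg.le_of_forall_eq_one_imp hf (fun y => (h y).mp) x)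
    (hf.le_of_forall_eq_one_imp hg (fun y => (h y).mpr) x)

end HomToUnitInterval

section Embedding

variable {M} {F : Set A} {f g : A → ℝ}

theorem _root_.IsMVHomToI.comp_quotient_mk (hF : IsMVFilter M F)
    {φ : Quotient (M.filterSetoid hF) → ℝ} (hφ : IsMVHomToI (M.quotient hF) φ) :
    IsMVHomToI M (φ ∘ Quotient.mk _) :=
  ⟨fun x => hφ.1 (Quotient.mk _ x), hφ.2.1, fun x y => hφ.2.2.1 (Quotient.mk _ x) (Quotient.mk _ y),
    fun x => hφ.2.2.2 (Quotient.mk _ x)⟩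

theorem _root_.IsMaximalMVFilter.exists_isQuotEmbedding (hmax : IsMaximalMVFilter M F) :
    ∃ f : A → ℝ, IsQuotEmbedding M F f := by
  obtain ⟨φ, hφ, hinj⟩ := (M.quotient hmax.1).exists_injective_isMVHomToI
    (quotient_zero_ne_one hmax.1 hmax.2.1) hmax.quotient_isChain hmax.quotient_isLocallyFinite
  exact ⟨φ ∘ Quotient.mk _, hφ.comp_quotient_mk hmax.1, fun _ _ => hinj.eq_iff.trans Quotient.eq⟩

theorem _root_.IsQuotEmbedding.eq_one_iff (hf : IsQuotEmbedding M F f) (x : A) :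
    f x = 1 ↔ x ⇒ₘ M.one ∈ F ∧ M.one ⇒ₘ x ∈ F := by
  rw [← hf.1.map_one]; exact hf.2 x M.one

theorem _root_.IsQuotEmbedding.eq_one_iff_mem (hf : IsQuotEmbedding M F f) (hF : IsMVFilter M F)
    (x : A) : f x = 1 ↔ x ∈ F := by
  rw [hf.eq_one_iff, M.imp_one_left, (M.le_one x : x ⇒ₘ M.one = M.one)]
  exact and_iff_right hF.one_mem

theorem _root_.IsQuotEmbedding.isMaximalMVFilter (hf : IsQuotEmbedding M F f)
    (hF : IsMVFilter M F) : IsMaximalMVFilter M F := by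
  refine ⟨hF, fun hU => ?_, fun G hG hGU hFG => Set.Subset.antisymm (fun z hz => ?_) hFG⟩
  · have h0 := (hf.eq_one_iff_mem hF M.zero).mpr (hU ▸ Set.mem_univ _)
    rw [hf.1.2.1] at h0
    exact zero_ne_one h0
  by_contra hzF
  have hz1 : f z < 1 := lt_of_le_of_ne (hf.1.1 z).2 fun h => hzF ((hf.eq_one_iff_mem hF z).mp h)
  obtain ⟨k, hk⟩ := hf.1.exists_map_pow_eq_zero hz1
  have hkF : M.pow z k ⇒ₘ M.zero ∈ F := ((hf.2 _ _).mp (hk.trans hf.1.2.1.symm)).1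
  exact hGU (hG.eq_univ_of_zero_mem (hG.mem_of_imp_mem (hG.pow_mem hz k) (hFG hkF)))

theorem _root_.IsQuotEmbedding.unique (hf : IsQuotEmbedding M F f) (hg : IsQuotEmbedding M F g) :
    f = g :=
  hf.1.eq_of_forall_eq_one_iff hg.1 fun x => (hf.eq_one_iff x).trans (hg.eq_one_iff x).symm

end Embedding

end MVAlg

/-- A filter `F` of an MV-algebra `A` is maximal iff the quotient `A/F` embeds
into the MV-algebra `[0,1]`, and in that case the embedding is unique. -/
theorem maximal_iff_embeds_in_unit_interval {A : Type} (M : MVAlg A)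
    (F : Set A) (hF : IsMVFilter M F) :
    (IsMaximalMVFilter M F ↔ ∃ f : A → ℝ, IsQuotEmbedding M F f) ∧
    (IsMaximalMVFilter M F →
      ∀ f g : A → ℝ, IsQuotEmbedding M F f → IsQuotEmbedding M F g → f = g) :=
  ⟨⟨IsMaximalMVFilter.exists_isQuotEmbedding, fun ⟨_, hf⟩ => hf.isMaximalMVFilter hF⟩,
    fun _ _ _ hf hg => hf.unique hg⟩
end

section
/- Two isomorphic MV-subalgebras of [0,1] are equal, and the only MV-isomorphism between them is the identity. -/
/-- `S` is an MV-subalgebra of the standard MV-algebra `[0,1]`: a subset of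
`[0,1]` containing `0` and `1` and closed under `x ⊕ y = min(1,x+y)` and
`¬x = 1-x`. -/
def IsMVSubalgebra (S : Set ℝ) : Prop :=
  S ⊆ Set.Icc (0:ℝ) 1 ∧ (0:ℝ) ∈ S ∧ (1:ℝ) ∈ S ∧
    (∀ x ∈ S, ∀ y ∈ S, min 1 (x + y) ∈ S) ∧ (∀ x ∈ S, 1 - x ∈ S)

/-- Two isomorphic MV-subalgebras of `[0,1]` are equal, and the only
MV-isomorphism between them is the identity. -/
theorem subalgebras_of_unit_interval_rigid (S T : Set ℝ)
    (hS : IsMVSubalgebra S) (hT : IsMVSubalgebra T) (f : ℝ → ℝ)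
    (hbij : Set.BijOn f S T)
    (hoplus : ∀ x ∈ S, ∀ y ∈ S, f (min 1 (x + y)) = min 1 (f x + f y))
    (hneg : ∀ x ∈ S, f (1 - x) = 1 - f x) :
    S = T ∧ ∀ x ∈ S, f x = x := by
  obtain ⟨hSsub, hS0, hS1, hSadd, hSneg⟩ := hS
  have hfmem : ∀ x ∈ S, f x ∈ Set.Icc (0:ℝ) 1 := fun x hx => hT.1 (hbij.mapsTo hx)
  have hinj := hbij.injOn
  -- f 0 = 0
  have h00 : f 0 = min 1 (f 0 + f 0) := by
    have h := hoplus 0 hS0 0 hS0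
    have : min (1:ℝ) (0 + 0) = 0 := by norm_num
    rwa [this] at h
  have hf0 : f 0 = 0 := by
    rcases le_or_gt (f 0 + f 0) 1 with h | h
    · rw [min_eq_right h] at h00; linarith
    · exfalso
      have hf0' : f 0 = 1 := by rw [h00, min_eq_left h.le]
      have hf1 : f 1 = 0 := by
        have := hneg 0 hS0
        simp only [sub_zero] at this
        rw [this, hf0']; ring
      have h01 := hoplus 0 hS0 1 hS1
      have e1 : min (1:ℝ) (0 + 1) = 1 := by norm_num
      rw [e1, hf0', hf1] at h01
      norm_num at h01
  have hf1 : f 1 = 1 := by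
    have := hneg 0 hS0
    simp only [sub_zero] at this
    rw [this, hf0]; ring
  -- gap doubling step
  have step : ∀ a ∈ S, a < f a → ∃ b ∈ S, b < f b ∧ 2 * (f a - a) ≤ f b - b := by
    intro a haS ha
    obtain ⟨ha0, ha1⟩ := hSsub haS
    obtain ⟨hfa0, hfa1⟩ := hfmem a haS
    rcases le_or_gt (f a) (1/2) with hfa2 | hfa2
    · -- use b = a ⊕ a = 2a
      have haa : a + a ≤ 1 := by linarith
      have hfaa : f a + f a ≤ 1 := by linarith
      have hbS : min 1 (a + a) ∈ S := hSadd a haS a haS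
      rw [min_eq_right haa] at hbS
      have hb := hoplus a haS a haS
      rw [min_eq_right haa, min_eq_right hfaa] at hb
      exact ⟨a + a, hbS, by rw [hb]; linarith, by rw [hb]; ring_nf; linarith⟩
    · rcases lt_or_ge a (1/2) with ha2 | ha2
      · -- a < 1/2 < f a : contradiction via injectivity
        exfalso
        have haa : a + a ≤ 1 := by linarith
        have hbS : min 1 (a + a) ∈ S := hSadd a haS a haS
        rw [min_eq_right haa] at hbS
        have hb := hoplus a haS a haS
        rw [min_eq_right haa, min_eq_left (by linarith : (1:ℝ) ≤ f a + f a)] at hb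
        have : a + a = 1 := hinj hbS hS1 (by rw [hb, hf1])
        linarith
      · -- 1/2 ≤ a : use b = 2a - 1
        have hcS : (1 - a) ∈ S := hSneg a haS
        have hcc : (1 - a) + (1 - a) ≤ 1 := by linarith
        have hdS : min 1 ((1 - a) + (1 - a)) ∈ S := hSadd _ hcS _ hcS
        rw [min_eq_right hcc] at hdS
        have hfc : f (1 - a) = 1 - f a := hneg a haS
        have hfcc : f (1 - a) + f (1 - a) ≤ 1 := by rw [hfc]; linarith
        have hd := hoplus _ hcS _ hcS
        rw [min_eq_right hcc, min_eq_right hfcc, hfc] at hd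
        -- hd : f ((1-a)+(1-a)) = (1 - f a) + (1 - f a)
        have hbS : (1 - ((1 - a) + (1 - a))) ∈ S := hSneg _ hdS
        have hfb : f (1 - ((1 - a) + (1 - a))) = 1 - ((1 - f a) + (1 - f a)) := by
          rw [hneg _ hdS, hd]
        refine ⟨1 - ((1 - a) + (1 - a)), hbS, ?_, ?_⟩
        · rw [hfb]; linarith
        · rw [hfb]; ring_nf; linarith
  -- iterate
  have grow : ∀ n : ℕ, ∀ a ∈ S, a < f a → ∃ b ∈ S, b < f b ∧ 2 ^ n * (f a - a) ≤ f b - b := by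
    intro n
    induction n with
    | zero => intro a haS ha; exact ⟨a, haS, ha, by norm_num⟩
    | succ k ih =>
      intro a haS ha
      obtain ⟨b, hbS, hb, hgap⟩ := step a haS ha
      obtain ⟨c, hcS, hc, hgap2⟩ := ih b hbS hb
      refine ⟨c, hcS, hc, ?_⟩
      have h2 : (0:ℝ) ≤ 2 ^ k := by positivity
      calc 2 ^ (k+1) * (f a - a) = 2 ^ k * (2 * (f a - a)) := by ring
        _ ≤ 2 ^ k * (f b - b) := by nlinarith
        _ ≤ f c - c := hgap2
  -- no x with x < f x
  have main : ∀ x ∈ S, ¬ x < f x := by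
    intro x hxS hlt
    have hδpos : 0 < f x - x := by linarith
    obtain ⟨n, hn⟩ := pow_unbounded_of_one_lt (1/(f x - x)) (by norm_num : (1:ℝ) < 2)
    obtain ⟨b, hbS, _, hgap⟩ := grow n x hxS hlt
    obtain ⟨hb0, hb1⟩ := hSsub hbS
    obtain ⟨hfb0, hfb1⟩ := hfmem b hbS
    have h1 : 1 < 2 ^ n * (f x - x) := by
      rw [div_lt_iff₀ hδpos] at hn; linarith
    have h2 : f b - b ≤ 1 := by linarith
    linarith
  have hid : ∀ x ∈ S, f x = x := by
    intro x hxS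
    have h1 := main x hxS
    have h2 := main (1 - x) (hSneg x hxS)
    rw [hneg x hxS] at h2
    push_neg at h1 h2
    linarith
  refine ⟨?_, hid⟩
  have himg : f '' S = T := hbij.image_eq
  rw [← himg]
  ext y
  constructor
  · intro hy; rw [← hid y hy]; exact ⟨y, hy, rfl⟩
  · rintro ⟨x, hxS, rfl⟩; rwa [hid x hxS]
end

section
/- Let L be a modal many-valued logic, F_L its Lindenbaum-Tarski algebra (an MMV-algebra), and W_L the set of MV-homomorphisms u : F_L → [0,1]. Define u R_L v iff for all φ, u(□φ) = 1 implies v(φ) = 1. Then u R_L v holds if and only if u(□φ) ≤ v(φ) for all φ. -/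
/-- A modal many-valued (MMV) algebra: an MV-algebra with a unary operation `□`
satisfying `□(x⇒y) ⇒ (□x⇒□y) = 1`, `□(x⊕x) = □x⊕□x`, `□(x⊙x) = □x⊙□x` and
`□(x ⊕ x^m) = □x ⊕ (□x)^m` for every positive integer `m`. -/
structure MMVAlg (A : Type) extends MVAlg A where
  box : A → A
  k_ax : ∀ x y, toMVAlg.imp (box (toMVAlg.imp x y))
    (toMVAlg.imp (box x) (box y)) = toMVAlg.one
  box_oplus : ∀ x, box (oplus x x) = oplus (box x) (box x)
  box_odot : ∀ x, box (toMVAlg.odot x x) = toMVAlg.odot (box x) (box x)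
  box_pow : ∀ x, ∀ m : ℕ, 1 ≤ m →
    box (oplus x (toMVAlg.pow x m)) = oplus (box x) (toMVAlg.pow (box x) m)

-- dyadic term on the algebra
def MVtau {A : Type} (M : MVAlg A) : ℕ → ℕ → A → A
  | 0, _, x => x
  | n+1, k, x =>
    if k ≤ 2^n then MVtau M n k (M.oplus x x)
    else MVtau M n (k - 2^n) (M.odot x x)

-- dyadic term on reals
def tauR : ℕ → ℕ → ℝ → ℝ
  | 0, _, t => t
  | n+1, k, t =>
    if k ≤ 2^n then tauR n k (min 1 (2*t))
    else tauR n (k - 2^n) (max 0 (2*t - 1))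

lemma hom_odot {A : Type} {M : MVAlg A} {f : A → ℝ} (hf : IsMVHomToI M f)
    (x y : A) : f (M.odot x y) = max 0 (f x + f y - 1) := by
  obtain ⟨h01, hz, hop, hneg⟩ := hf
  simp only [MVAlg.odot, hneg, hop]
  rcases le_total 1 ((1 - f x) + (1 - f y)) with h | h
  · rw [min_eq_left h]; rw [max_eq_left] <;> linarith
  · rw [min_eq_right h]; rw [max_eq_right] <;> linarith

lemma hom_tau {A : Type} {M : MVAlg A} {f : A → ℝ} (hf : IsMVHomToI M f) :
    ∀ n k x, f (MVtau M n k x) = tauR n k (f x) := by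
  intro n
  induction n with
  | zero => intro k x; rfl
  | succ n ih =>
    intro k x
    simp only [MVtau, tauR]
    split
    · rw [ih, hf.2.2.1]; ring_nf
    · rw [ih, hom_odot hf]; ring_nf

lemma box_tau {A : Type} (M : MMVAlg A) :
    ∀ n k x, M.box (MVtau M.toMVAlg n k x) = MVtau M.toMVAlg n k (M.box x) := by
  intro n
  induction n with
  | zero => intro k x; rfl
  | succ n ih =>
    intro k x
    simp only [MVtau]
    split
    · rw [ih, M.box_oplus]
    · rw [ih, M.box_odot]

lemma tauR_eq_one_iff : ∀ n k, 0 < k → k ≤ 2^n → ∀ t : ℝ, 0 ≤ t → t ≤ 1 →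
    (tauR n k t = 1 ↔ (k : ℝ)/2^n ≤ t) := by
  intro n
  induction n with
  | zero =>
    intro k hk hk2 t ht0 ht1
    interval_cases k
    simp only [tauR, pow_zero, Nat.cast_one]
    constructor
    · intro h; rw [h]; norm_num
    · intro h; linarith
  | succ n ih =>
    intro k hk hk2 t ht0 ht1
    simp only [tauR]
    have hp : (2:ℝ)^(n+1) = 2^n * 2 := pow_succ 2 n
    split_ifs with h
    · rw [ih k hk h (min 1 (2*t)) (by positivity) (min_le_left _ _)]
      have hk1 : (k:ℝ)/2^n ≤ 1 := by
        rw [div_le_one (by positivity)]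
        exact_mod_cast h
      constructor
      · intro hle
        have h2' := (le_min_iff.mp hle).2
        rw [div_le_iff₀ (by positivity)] at h2' ⊢
        nlinarith [hp]
      · intro hle
        refine le_min hk1 ?_
        rw [div_le_iff₀ (by positivity)] at hle ⊢
        push_cast at hle
        nlinarith [hp]
    · push_neg at h
      have h' : 2^n ≤ k := le_of_lt h
      have hk' : 0 < k - 2^n := by omega
      have hk2' : k - 2^n ≤ 2^n := by
        have : k ≤ 2^(n+1) := hk2
        simp [pow_succ] at this; omega
      have hm0 : (0:ℝ) ≤ max 0 (2*t - 1) := le_max_left _ _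
      have hm1 : max 0 (2*t - 1) ≤ 1 := by
        apply max_le <;> linarith
      rw [ih _ hk' hk2' _ hm0 hm1]
      have hc : ((k - 2^n : ℕ) : ℝ) = (k:ℝ) - 2^n := by
        push_cast [h']; ring
      have hpos : (0:ℝ) < ((k - 2^n : ℕ):ℝ)/2^n ∨ True := Or.inr trivial
      constructor
      · intro hle
        rcases le_max_iff.mp hle with h0 | h1
        · exfalso
          have hkp : (0:ℝ) < ((k - 2^n : ℕ):ℝ) := by exact_mod_cast hk'
          have : (0:ℝ) < ((k - 2^n : ℕ):ℝ)/2^n := by positivity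
          linarith
        · rw [div_le_iff₀ (by positivity)] at h1 ⊢
          rw [hc] at h1
          push_cast
          nlinarith [hp]
      · intro hle
        refine le_max_of_le_right ?_
        rw [div_le_iff₀ (by positivity)] at hle ⊢
        rw [hc]
        push_cast at hle
        nlinarith [hp]

/-- In the canonical model of a modal many-valued logic, with worlds the
MV-homomorphisms `u : F_L → [0,1]` and `u R_L v` iff `u(□φ) = 1` implies
`v(φ) = 1`, one has `u R_L v` iff `u ∘ □ ≤ v`. -/
theorem canonical_relation_iff_le {A : Type} (M : MMVAlg A) (u v : A → ℝ)
    (hu : IsMVHomToI M.toMVAlg u) (hv : IsMVHomToI M.toMVAlg v) :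
    (∀ a : A, u (M.box a) = 1 → v a = 1) ↔ (∀ a : A, u (M.box a) ≤ v a) := by
  constructor
  · intro h a
    by_contra hlt
    push_neg at hlt
    have hb0 : (0:ℝ) ≤ v a := (hv.1 a).1
    have hb1 : v a ≤ 1 := (hv.1 a).2
    have hc0 : (0:ℝ) ≤ u (M.box a) := (hu.1 _).1
    have hc1 : u (M.box a) ≤ 1 := (hu.1 _).2
    obtain ⟨n, hn⟩ : ∃ n : ℕ, ((1:ℝ)/2)^n < u (M.box a) - v a := by
      apply exists_pow_lt_of_lt_one (by linarith)
      norm_num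
    set k : ℕ := ⌊v a * 2^n⌋₊ + 1 with hkdef
    have hfl : (⌊v a * 2^n⌋₊ : ℝ) ≤ v a * 2^n :=
      Nat.floor_le (by positivity)
    have hflt : v a * 2^n < (k:ℝ) := by
      push_cast [hkdef]
      linarith [Nat.lt_floor_add_one (v a * (2:ℝ)^n)]
    have hkle : (k:ℝ) ≤ v a * 2^n + 1 := by
      push_cast [hkdef]; linarith
    have h2pos : (0:ℝ) < 2^n := by positivity
    have hrb : v a < (k:ℝ)/2^n := by
      rw [lt_div_iff₀ h2pos]; linarith
    have hrc : (k:ℝ)/2^n < u (M.box a) := by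
      rw [div_lt_iff₀ h2pos]
      have : ((1:ℝ)/2)^n * 2^n = 1 := by
        rw [div_pow, one_pow, div_mul_cancel₀]
        positivity
      nlinarith
    have hk0 : 0 < k := Nat.succ_pos _
    have hk2 : k ≤ 2^n := by
      have : (k:ℝ) < 2^n := by
        calc (k:ℝ) = (k:ℝ)/2^n * 2^n := by field_simp
        _ < u (M.box a) * 2^n := by
            apply mul_lt_mul_of_pos_right hrc h2pos
        _ ≤ 1 * 2^n := by apply mul_le_mul_of_nonneg_right hc1 (le_of_lt h2pos)
        _ = 2^n := one_mul _
      exact_mod_cast le_of_lt this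
    have h1 : u (M.box (MVtau M.toMVAlg n k a)) = 1 := by
      rw [box_tau, hom_tau hu]
      exact (tauR_eq_one_iff n k hk0 hk2 _ hc0 hc1).mpr (le_of_lt hrc)
    have h2 : v (MVtau M.toMVAlg n k a) = 1 := h _ h1
    rw [hom_tau hv] at h2
    have := (tauR_eq_one_iff n k hk0 hk2 _ hb0 hb1).mp h2
    linarith
  · intro h a h1
    have := h a
    rw [h1] at this
    exact le_antisymm (hv.1 a).2 this
end
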